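/- arXiv:1401.2071 — 4 statements merged into one kernel-verified Lean document; each statement's English description precedes it below -/
import Mathlib

section
/- Let k ≥ 0 and let V_k = {(x,y) ∈ ℤ² : 0 ≤ x ≤ 8·2^k − 4, y ∈ {0,1}} (a 2 × (8·2^k − 3) grid with n = 16·2^k − 6 points). Let d be any metric on V_k such that (i) d((x₁,y₁),(x₂,y₂)) = |x₁ − x₂| + |y₁ − y₂| whenever x₁ = x₂ or y₁ = y₂, and (ii) d((x₁,y₁),(x₂,y₂)) ≥ |x₁ − x₂| for all points. Then there exists an enumeration x₀, x₁, …, x_{n−1} of all points of V_k with x₀ = (0,0) and x_{n−1} = (4·2^k − 2, 1) such that for every index i < n−1 and every point y ∈ V_k not among x₀,…,x_i one has d(x_i, x_{i+1}) ≤ d(x_i, y), and the total length Σ_{i<n−1} d(x_i, x_{i+1}) equals (12 + 4k)·2^k − 3. -/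
/-!
Under (i) and (ii), `d p q` is at least `lowerDist p q`, which is the rectilinear distance when `p`
and `q` share a row or a column and `|x₁ - x₂|` otherwise; for such axis-parallel pairs `d p q` is
the rectilinear distance. So it suffices to build one tour whose steps are axis-parallel and nearest
for `lowerDist`: it is a nearest-neighbour tour for every admissible `d`, always of the same length.

The tour is assembled from pieces covering blocks of consecutive columns. Each step of a piece is
no longer than the distance from its start to the walls of a vertical strip, so no point outside the
strip can undercut it, and pieces lying side by side can be concatenated. A piece of width `2w` is a
piece of width `w` followed by a translated one, possibly followed by a jump back to a point of the
first two columns that was skipped and kept pending; the steps of the first piece must beat that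
pending point too.
-/

namespace NNRGrid

open Set

def rect (p q : ℤ × ℤ) : ℤ := |p.1 - q.1| + |p.2 - q.2|

def Aligned (p q : ℤ × ℤ) : Prop := p.1 = q.1 ∨ p.2 = q.2

instance : DecidableRel Aligned := fun _ _ => inferInstanceAs (Decidable (_ ∨ _))

def lowerDist (p q : ℤ × ℤ) : ℤ := if Aligned p q then rect p q else |p.1 - q.1|

lemma lowerDist_of_aligned {p q : ℤ × ℤ} (h : Aligned p q) : lowerDist p q = rect p q :=
  if_pos h

lemma abs_fst_sub_le_lowerDist (p q : ℤ × ℤ) : |p.1 - q.1| ≤ lowerDist p q := by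
  unfold lowerDist rect
  split_ifs
  · exact le_add_of_nonneg_right (abs_nonneg _)
  · rfl

lemma le_lowerDist_of_le_sub_fst {c : ℤ} {p q : ℤ × ℤ} (h : c ≤ p.1 - q.1) :
    c ≤ lowerDist p q := by
  linarith [le_abs_self (p.1 - q.1), abs_fst_sub_le_lowerDist p q]

lemma le_lowerDist_of_le_fst_sub {c : ℤ} {p q : ℤ × ℤ} (h : c ≤ q.1 - p.1) :
    c ≤ lowerDist p q := by
  linarith [neg_abs_le (p.1 - q.1), abs_fst_sub_le_lowerDist p q]

section Metric

variable {S : Set (ℤ × ℤ)} {d : ℤ × ℤ → ℤ × ℤ → ℝ} {p q : ℤ × ℤ}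

lemma eq_rect_of_aligned
    (haxis : ∀ p ∈ S, ∀ q ∈ S, Aligned p q →
      d p q = |(p.1 : ℝ) - (q.1 : ℝ)| + |(p.2 : ℝ) - (q.2 : ℝ)|)
    (hp : p ∈ S) (hq : q ∈ S) (hpq : Aligned p q) : d p q = rect p q := by
  rw [haxis p hp q hq hpq, rect]
  push_cast
  rfl

lemma lowerDist_le
    (haxis : ∀ p ∈ S, ∀ q ∈ S, Aligned p q →
      d p q = |(p.1 : ℝ) - (q.1 : ℝ)| + |(p.2 : ℝ) - (q.2 : ℝ)|)
    (hlow : ∀ p ∈ S, ∀ q ∈ S, |(p.1 : ℝ) - (q.1 : ℝ)| ≤ d p q) (hp : p ∈ S) (hq : q ∈ S) :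
    (lowerDist p q : ℝ) ≤ d p q := by
  by_cases hpq : Aligned p q
  · rw [lowerDist_of_aligned hpq, eq_rect_of_aligned haxis hp hq hpq]
  · rw [lowerDist, if_neg hpq]
    exact_mod_cast hlow p hp q hq

end Metric

def shift (t : ℤ) : ℤ × ℤ → ℤ × ℤ := Prod.map (· + t) id

@[simp] lemma shift_mk (t x y : ℤ) : shift t (x, y) = (x + t, y) := rfl

@[simp] lemma shift_fst (t : ℤ) (p : ℤ × ℤ) : (shift t p).1 = p.1 + t := rfl

@[simp] lemma shift_snd (t : ℤ) (p : ℤ × ℤ) : (shift t p).2 = p.2 := rfl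

lemma shift_injective (t : ℤ) : Function.Injective (shift t) :=
  (add_left_injective t).prodMap Function.injective_id

@[simp] lemma aligned_shift (t : ℤ) (p q : ℤ × ℤ) :
    Aligned (shift t p) (shift t q) ↔ Aligned p q := by
  simp [Aligned]

@[simp] lemma rect_shift (t : ℤ) (p q : ℤ × ℤ) : rect (shift t p) (shift t q) = rect p q := by
  simp [rect]

@[simp] lemma lowerDist_shift (t : ℤ) (p q : ℤ × ℤ) :
    lowerDist (shift t p) (shift t q) = lowerDist p q := by
  simp [lowerDist]

def StripStep (a b : ℤ) (p q : ℤ × ℤ) : Prop :=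
  Aligned p q ∧ rect p q ≤ p.1 - a ∧ rect p q ≤ b - p.1

instance (a b : ℤ) : DecidableRel (StripStep a b) :=
  fun _ _ => inferInstanceAs (Decidable (_ ∧ _))

lemma StripStep.mono {a b a' b' : ℤ} {p q : ℤ × ℤ} (h : StripStep a b p q) (ha : a' ≤ a)
    (hb : b ≤ b') : StripStep a' b' p q :=
  ⟨h.1, by linarith [h.2.1], by linarith [h.2.2]⟩

lemma StripStep.shift {a b : ℤ} {p q : ℤ × ℤ} (t : ℤ) (h : StripStep a b p q) :
    StripStep (a + t) (b + t) (shift t p) (shift t q) := by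
  obtain ⟨hpq, ha, hb⟩ := h
  refine ⟨(aligned_shift t p q).2 hpq, ?_, ?_⟩ <;> simp only [rect_shift, shift_fst] <;> linarith

lemma StripStep.rect_le_lowerDist {a b : ℤ} {p q y : ℤ × ℤ} (h : StripStep a b p q)
    (hy : y.1 ≤ a ∨ b ≤ y.1) : rect p q ≤ lowerDist p y := by
  rcases hy with hy | hy
  · exact le_lowerDist_of_le_sub_fst (by linarith [h.2.1])
  · exact le_lowerDist_of_le_fst_sub (by linarith [h.2.2])

/-- The points of `P` are visited after `l`, so each step of `l` must also beat them. -/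
def IsNNPath : List (ℤ × ℤ) → List (ℤ × ℤ) → Prop
  | p :: q :: l, P => (∀ y ∈ q :: (l ++ P), rect p q ≤ lowerDist p y) ∧ IsNNPath (q :: l) P
  | _, _ => True

instance instDecidableIsNNPath : ∀ l P, Decidable (IsNNPath l P)
  | [], _ => .isTrue trivial
  | [_], _ => .isTrue trivial
  | _ :: q :: l, P =>
    haveI := instDecidableIsNNPath (q :: l) P
    inferInstanceAs (Decidable (_ ∧ _))

lemma IsNNPath.of_strip {a b : ℤ} {P P' : List (ℤ × ℤ)} :
    ∀ {l : List (ℤ × ℤ)}, IsNNPath l P → l.IsChain (StripStep a b) →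
      (∀ y ∈ P', y.1 ≤ a ∨ b ≤ y.1 ∨ y ∈ P) → IsNNPath l P'
  | [], _, _, _ | [_], _, _, _ => trivial
  | p :: q :: l, ⟨hnear, hl⟩, .cons_cons hpq hc, hP' => by
    refine ⟨fun y hy => ?_, hl.of_strip hc hP'⟩
    simp only [List.mem_cons, List.mem_append] at hy
    rcases hy with rfl | hy | hy
    · exact hnear _ List.mem_cons_self
    · exact hnear y (by simp [hy])
    · rcases hP' y hy with hy' | hy' | hy'
      · exact hpq.rect_le_lowerDist (.inl hy')
      · exact hpq.rect_le_lowerDist (.inr hy')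
      · exact hnear y (by simp [hy'])

lemma IsNNPath.map_shift (t : ℤ) {P : List (ℤ × ℤ)} :
    ∀ {l : List (ℤ × ℤ)}, IsNNPath l P → IsNNPath (l.map (shift t)) (P.map (shift t))
  | [], _ | [_], _ => trivial
  | p :: q :: l, ⟨hnear, hl⟩ => by
    refine ⟨?_, hl.map_shift t⟩
    simp only [← List.map_append, ← List.map_cons, List.forall_mem_map, rect_shift,
      lowerDist_shift]
    exact hnear

lemma IsNNPath.append {P : List (ℤ × ℤ)} :
    ∀ {A B : List (ℤ × ℤ)}, IsNNPath A (B ++ P) → IsNNPath B P →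
      (∀ x ∈ A.getLast?, ∀ y ∈ B.head?, ∀ z ∈ B ++ P, rect x y ≤ lowerDist x z) →
      IsNNPath (A ++ B) P
  | [], _, _, hB, _ => hB
  | [_], [], _, _, _ => trivial
  | [x], y :: B, _, hB, hjoin => ⟨hjoin x rfl y rfl, hB⟩
  | p :: q :: A, B, ⟨hnear, hA⟩, hB, hjoin =>
    ⟨by simpa using hnear, hA.append hB (fun x hx => hjoin x (by simpa using hx))⟩

lemma IsNNPath.rect_le_lowerDist {P : List (ℤ × ℤ)} :
    ∀ {l : List (ℤ × ℤ)}, IsNNPath l P → ∀ {i j : ℕ} (hij : i < j) (hj : j < l.length),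
      rect l[i] l[i + 1] ≤ lowerDist l[i] l[j]
  | [], _, _, _, _, hj | [_], _, _, _, _, hj => by
    simp only [List.length_cons, List.length_nil] at hj; omega
  | _ :: q :: l, ⟨hnear, _⟩, 0, _ + 1, _, hj =>
    hnear _ (List.mem_append_left (as := q :: l) P (List.getElem_mem (Nat.lt_of_succ_lt_succ hj)))
  | p :: q :: l, ⟨_, hl⟩, i + 1, j + 1, hij, hj =>
    hl.rect_le_lowerDist (Nat.lt_of_succ_lt_succ hij) (Nat.lt_of_succ_lt_succ hj)

def pathLength : List (ℤ × ℤ) → ℤ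
  | p :: q :: l => rect p q + pathLength (q :: l)
  | _ => 0

lemma pathLength_map_shift (t : ℤ) : ∀ l : List (ℤ × ℤ), pathLength (l.map (shift t)) = pathLength l
  | [] | [_] => rfl
  | p :: q :: l => by
    rw [List.map_cons, List.map_cons, pathLength, ← List.map_cons, pathLength_map_shift t,
      rect_shift, pathLength]

lemma pathLength_append : ∀ {A : List (ℤ × ℤ)} {x : ℤ × ℤ} (y : ℤ × ℤ) (B : List (ℤ × ℤ)),
    A.getLast? = some x → pathLength (A ++ y :: B) = pathLength A + rect x y + pathLength (y :: B)
  | [x], _, y, B, rfl => by simp [pathLength]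
  | p :: q :: A, x, y, B, h => by
    simp only [List.cons_append, pathLength]
    rw [← List.cons_append, pathLength_append y B (by simpa using h)]
    ring

lemma pathLength_eq_sum : ∀ l : List (ℤ × ℤ),
    pathLength l = ∑ i ∈ Finset.range (l.length - 1), rect (l.getD i 0) (l.getD (i + 1) 0)
  | [] | [_] => rfl
  | p :: q :: l => by
    simp only [pathLength, pathLength_eq_sum (q :: l), List.length_cons, Nat.add_sub_cancel]
    rw [Finset.sum_range_succ', add_comm]
    rfl

structure NNPiece (l : List (ℤ × ℤ)) (S : Set (ℤ × ℤ)) (a b : ℤ) (P : List (ℤ × ℤ))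
    (p₀ p₁ : ℤ × ℤ) (m : ℤ) : Prop where
  head?_eq : l.head? = some p₀
  getLast?_eq : l.getLast? = some p₁
  nodup : l.Nodup
  mem_iff : ∀ p, p ∈ l ↔ p ∈ S
  pathLength_eq : pathLength l = m
  isNNPath : IsNNPath l P
  isChain : l.IsChain (StripStep a b)

namespace NNPiece

variable {l A B : List (ℤ × ℤ)} {S T : Set (ℤ × ℤ)} {a b a' b' c e : ℤ} {P Q : List (ℤ × ℤ)}
  {p₀ p₁ q₀ q₁ : ℤ × ℤ} {m m' : ℤ}

lemma singleton (p : ℤ × ℤ) (a b : ℤ) (P : List (ℤ × ℤ)) : NNPiece [p] {p} a b P p p 0 :=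
  ⟨rfl, rfl, List.nodup_singleton p, by simp, rfl, trivial, List.IsChain.singleton p⟩

lemma mono_pending (h : NNPiece l S a b P p₀ p₁ m) (hP : Q ⊆ P) : NNPiece l S a b Q p₀ p₁ m :=
  { h with isNNPath := h.isNNPath.of_strip h.isChain fun _ hy => .inr (.inr (hP hy)) }

lemma map_shift (t : ℤ) (h : NNPiece l S a b P p₀ p₁ m) :
    NNPiece (l.map (shift t)) (shift t '' S) (a + t) (b + t) (P.map (shift t)) (shift t p₀)
      (shift t p₁) m where
  head?_eq := by simp [h.head?_eq]
  getLast?_eq := by simp [h.getLast?_eq]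
  nodup := h.nodup.map (shift_injective t)
  mem_iff p := by simp [h.mem_iff]
  pathLength_eq := (pathLength_map_shift t l).trans h.pathLength_eq
  isNNPath := h.isNNPath.map_shift t
  isChain := List.isChain_map _ |>.2 (h.isChain.imp fun _ _ hpq => hpq.shift t)

lemma append (hA : NNPiece A S a b P p₀ p₁ m) (hB : NNPiece B T a' b' Q q₀ q₁ m')
    (hST : Disjoint S T) (hT : ∀ p ∈ T, b ≤ p.1 ∨ p ∈ P) (hP : ∀ y ∈ P, y.1 ≤ a' ∨ y ∈ Q)
    (hjoin : StripStep c e p₁ q₀) (hnearT : ∀ p ∈ T, rect p₁ q₀ ≤ lowerDist p₁ p)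
    (hnearP : ∀ y ∈ P, rect p₁ q₀ ≤ lowerDist p₁ y)
    (hca : c ≤ a) (hca' : c ≤ a') (hbe : b ≤ e) (hbe' : b' ≤ e) :
    NNPiece (A ++ B) (S ∪ T) c e P p₀ q₁ (m + rect p₁ q₀ + m') := by
  obtain ⟨B, rfl⟩ := List.head?_eq_some_iff.1 hB.head?_eq
  refine ⟨by simp [hA.head?_eq], by simp [hB.getLast?_eq], ?_, fun p => ?_, ?_, ?_, ?_⟩
  · refine List.nodup_append.2 ⟨hA.nodup, hB.nodup, ?_⟩
    rintro p hp _ hq rfl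
    exact Set.disjoint_left.1 hST ((hA.mem_iff p).1 hp) ((hB.mem_iff p).1 hq)
  · simp [hA.mem_iff, hB.mem_iff]
  · rw [pathLength_append _ _ hA.getLast?_eq, hA.pathLength_eq, hB.pathLength_eq]
  · refine IsNNPath.append ?_ (hB.isNNPath.of_strip hB.isChain ?_) ?_
    · refine hA.isNNPath.of_strip hA.isChain fun y hy => ?_
      rcases List.mem_append.1 hy with hy | hy
      · rcases hT y ((hB.mem_iff y).1 hy) with hy' | hy'
        exacts [.inr (.inl hy'), .inr (.inr hy')]
      · exact .inr (.inr hy)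
    · intro y hy
      rcases hP y hy with hy' | hy'
      exacts [.inl hy', .inr (.inr hy')]
    · simp only [hA.getLast?_eq, Option.mem_def, Option.some.injEq, List.head?_cons]
      rintro x rfl y rfl z hz
      rcases List.mem_append.1 hz with hz | hz
      exacts [hnearT z ((hB.mem_iff z).1 hz), hnearP z hz]
  · refine List.isChain_append.2 ⟨hA.isChain.imp fun _ _ h => h.mono hca hbe,
      hB.isChain.imp fun _ _ h => h.mono hca' hbe', ?_⟩
    simp only [hA.getLast?_eq, Option.mem_def, Option.some.injEq, List.head?_cons]
    rintro x rfl y rfl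
    exact hjoin

lemma concat {r : ℤ × ℤ} (hA : NNPiece A S a b [r] p₀ p₁ m) (hr : r ∉ S)
    (hjoin : StripStep a b p₁ r) :
    NNPiece (A ++ [r]) (S ∪ {r}) a b [r] p₀ r (m + rect p₁ r) := by
  simpa using hA.append (singleton r a b [r]) (Set.disjoint_singleton_right.2 hr)
    (by simp) (by simp) hjoin (by simp [lowerDist_of_aligned hjoin.1])
    (by simp [lowerDist_of_aligned hjoin.1]) le_rfl le_rfl le_rfl le_rfl

theorem exists_tour (h : NNPiece l S a b P p₀ p₁ m) (d : ℤ × ℤ → ℤ × ℤ → ℝ)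
    (haxis : ∀ p ∈ S, ∀ q ∈ S, Aligned p q →
      d p q = |(p.1 : ℝ) - (q.1 : ℝ)| + |(p.2 : ℝ) - (q.2 : ℝ)|)
    (hlow : ∀ p ∈ S, ∀ q ∈ S, |(p.1 : ℝ) - (q.1 : ℝ)| ≤ d p q) :
    ∃ x : ℕ → ℤ × ℤ,
      (∀ i < l.length, x i ∈ S) ∧
      (∀ i < l.length, ∀ j < l.length, x i = x j → i = j) ∧
      (∀ p ∈ S, ∃ i < l.length, x i = p) ∧
      x 0 = p₀ ∧
      x (l.length - 1) = p₁ ∧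
      (∀ i < l.length - 1, ∀ y ∈ S, (∀ j ≤ i, x j ≠ y) →
        d (x i) (x (i + 1)) ≤ d (x i) y) ∧
      ∑ i ∈ Finset.range (l.length - 1), d (x i) (x (i + 1)) = m := by
  have hmem (i : ℕ) (hi : i < l.length) : l[i] ∈ S := (h.mem_iff _).1 (List.getElem_mem hi)
  have hstep (i : ℕ) (hi : i + 1 < l.length) : d l[i] l[i + 1] = rect l[i] l[i + 1] :=
    eq_rect_of_aligned haxis (hmem i (by omega)) (hmem (i + 1) hi)
      (List.isChain_iff_getElem.1 h.isChain i hi).1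
  refine ⟨fun i => l.getD i 0, ?_⟩
  dsimp only
  refine ⟨fun i hi => ?_, fun i hi j hj hij => ?_, fun p hp => ?_, ?_, ?_,
    fun i hi y hy hunvisited => ?_, ?_⟩
  · rw [List.getD_eq_getElem _ _ hi]
    exact hmem i hi
  · rwa [List.getD_eq_getElem _ _ hi, List.getD_eq_getElem _ _ hj, h.nodup.getElem_inj_iff] at hij
  · obtain ⟨i, hi, rfl⟩ := List.mem_iff_getElem.1 ((h.mem_iff p).2 hp)
    exact ⟨i, hi, List.getD_eq_getElem _ _ hi⟩
  · rw [List.getD_eq_getElem?_getD, ← List.head?_eq_getElem?, h.head?_eq]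
    rfl
  · rw [List.getD_eq_getElem?_getD, ← List.getLast?_eq_getElem?, h.getLast?_eq]
    rfl
  · obtain ⟨j, hj, rfl⟩ := List.mem_iff_getElem.1 ((h.mem_iff y).2 hy)
    have hij : i < j := by
      by_contra! hji
      exact hunvisited j hji (List.getD_eq_getElem _ _ hj)
    simp only [List.getD_eq_getElem _ _ (show i < l.length by omega),
      List.getD_eq_getElem _ _ (show i + 1 < l.length by omega), hstep i (by omega)]
    calc (rect l[i] l[i + 1] : ℝ) ≤ lowerDist l[i] l[j] := by
          exact_mod_cast h.isNNPath.rect_le_lowerDist hij hj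
      _ ≤ d l[i] l[j] := lowerDist_le haxis hlow (hmem i (by omega)) hy
  · rw [← h.pathLength_eq, pathLength_eq_sum, Int.cast_sum]
    refine Finset.sum_congr rfl fun i hi => ?_
    rw [Finset.mem_range] at hi
    rw [List.getD_eq_getElem _ _ (by omega), List.getD_eq_getElem _ _ (by omega),
      hstep i (by omega)]

end NNPiece

def grid (w : ℤ) : Set (ℤ × ℤ) := Ico 0 w ×ˢ {0, 1}

lemma mem_grid {w : ℤ} {p : ℤ × ℤ} : p ∈ grid w ↔ (0 ≤ p.1 ∧ p.1 < w) ∧ (p.2 = 0 ∨ p.2 = 1) :=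
  Iff.rfl

instance (w : ℤ) : DecidablePred (· ∈ grid w) := fun _ => decidable_of_iff _ mem_grid.symm

lemma image_shift_grid (t w : ℤ) : shift t '' grid w = Ico t (w + t) ×ˢ {0, 1} := by
  rw [grid, shift, prodMap_image_prod, image_add_const_Ico, zero_add, image_id]

lemma le_fst_of_mem_image_shift_grid {t w : ℤ} {p : ℤ × ℤ} (hp : p ∈ shift t '' grid w) :
    t ≤ p.1 := by
  rw [image_shift_grid] at hp
  exact hp.1.1

lemma grid_union_image_shift_grid {w v : ℤ} (hw : 0 ≤ w) (hv : 0 ≤ v) :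
    grid w ∪ shift w '' grid v = grid (w + v) := by
  rw [image_shift_grid, grid, grid, ← union_prod, Ico_union_Ico_eq_Ico hw (by linarith),
    add_comm v]

lemma disjoint_grid_image_shift_grid (w v : ℤ) : Disjoint (grid w) (shift w '' grid v) := by
  rw [image_shift_grid, grid]
  exact disjoint_prod.2 (.inl Ico_disjoint_Ico_same)

def sweepTail (w : ℤ) : List (ℤ × ℤ) := [(0, 1), (1, 1), (1, 0), (0, 0)].map (shift (w - 2))

namespace NNPiece

variable {l A B P Q : List (ℤ × ℤ)} {S : Set (ℤ × ℤ)} {a b m m' : ℤ} {p₀ p₁ q₁ : ℤ × ℤ}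

lemma of_subset_grid {w : ℤ} (hS : S ⊆ grid w)
    (h : l.head? = some p₀ ∧ l.getLast? = some p₁ ∧ l.Nodup ∧ (∀ p ∈ l, p ∈ S) ∧
      (∀ x ∈ List.range w.toNat, ∀ y ∈ [0, 1], ((x : ℤ), y) ∈ S → ((x : ℤ), y) ∈ l) ∧
      pathLength l = m ∧ IsNNPath l P ∧ l.IsChain (StripStep a b)) :
    NNPiece l S a b P p₀ p₁ m := by
  obtain ⟨h₀, h₁, hnodup, hl, hS', hm, hnn, hc⟩ := h
  refine ⟨h₀, h₁, hnodup, fun p => ⟨hl p, fun hp => ?_⟩, hm, hnn, hc⟩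
  obtain ⟨x, y⟩ := p
  obtain ⟨⟨hx0, hxw⟩, hy⟩ := mem_grid.1 (hS hp)
  lift x to ℕ using hx0
  exact hS' x (List.mem_range.2 (by omega)) y (by rcases hy with rfl | rfl <;> simp) hp

lemma length_eq {w : ℤ} (h : NNPiece l (grid w) a b P p₀ p₁ m) : l.length = 2 * w.toNat := by
  have hl : l.toFinset = Finset.Ico 0 w ×ˢ {0, 1} := by
    ext p
    simp [h.mem_iff, grid]
  rw [← List.toFinset_card_of_nodup h.nodup, hl, Finset.card_product, Int.card_Ico, sub_zero,
    mul_comm]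
  rfl

lemma append_map_shift {r w v x a' : ℤ}
    (hA : NNPiece A (grid w \ {(r, 1)}) (-1) w [(r, 1)] p₀ (x, 0) m)
    (hB : NNPiece B (grid v) a' v Q (0, 0) q₁ m') (hx : x + 2 = w) (hr : 0 ≤ r) (hrw : r + 4 ≤ w)
    (hv : 0 ≤ v) (ha' : r ≤ a' + w) :
    NNPiece (A ++ B.map (shift w)) (grid (w + v) \ {(r, 1)}) (-1) (w + v) [(r, 1)] p₀
      (shift w q₁) (m + 2 + m') := by
  have hr' : ((r, 1) : ℤ × ℤ) ∉ shift w '' grid v := fun h => by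
    linarith [le_fst_of_mem_image_shift_grid h]
  have hrect : rect (x, 0) (shift w (0, 0)) = 2 := by subst hx; simp [rect]
  have hjoin : StripStep (-1) (w + v) (x, 0) (shift w (0, 0)) :=
    ⟨.inr rfl, by rw [hrect]; dsimp only; linarith, by rw [hrect]; dsimp only; linarith⟩
  have h := hA.append (hB.map_shift w) ((disjoint_grid_image_shift_grid w v).mono_left sdiff_subset)
    (fun p hp => .inl (le_fst_of_mem_image_shift_grid hp)) (by simp [ha']) hjoin
    (fun p hp => le_lowerDist_of_le_fst_sub <| by
      rw [hrect]; dsimp only; linarith [le_fst_of_mem_image_shift_grid hp])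
    (fun y hy => by
      rw [List.mem_singleton.1 hy]
      exact le_lowerDist_of_le_sub_fst <| by rw [hrect]; dsimp only; linarith)
    le_rfl (by linarith) (by linarith) (by linarith)
  rwa [← grid_union_image_shift_grid (by linarith) hv, union_sdiff_distrib,
    sdiff_singleton_eq_self hr', ← hrect]

lemma append_map_shift_concat {r w v x : ℤ}
    (hA : NNPiece A (grid w \ {(r, 1)}) (-1) w [(r, 1)] p₀ (x, 0) m)
    (hB : NNPiece B (grid v) (-1) v Q (0, 0) (0, 1) m') (hx : x + 2 = w) (hr : 0 ≤ r)
    (hrw : r + 4 ≤ w) (hwv : w ≤ v + r) :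
    NNPiece (A ++ B.map (shift w) ++ [(r, 1)]) (grid (w + v)) (-1) (w + v) [] p₀ (r, 1)
      (m + 2 + m' + (w - r)) := by
  have hrect : rect (shift w (0, 1)) (r, 1) = w - r := by
    simp [rect, abs_of_nonneg (show 0 ≤ w - r by linarith)]
  have hjoin : StripStep (-1) (w + v) (shift w (0, 1)) (r, 1) :=
    ⟨.inr rfl, by simp only [hrect, shift_fst]; linarith, by simp only [hrect, shift_fst]; linarith⟩
  have h := (hA.append_map_shift hB hx hr hrw (by linarith) (by linarith)).concat (by simp) hjoin
  have hmem : ((r, 1) : ℤ × ℤ) ∈ grid (w + v) := mem_grid.2 ⟨⟨hr, by linarith⟩, .inr rfl⟩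
  rw [sdiff_union_of_subset (singleton_subset_iff.2 hmem), hrect] at h
  exact h.mono_pending (List.nil_subset _)

lemma append_sweepTail {w : ℤ}
    (hL : NNPiece l (grid (w - 2)) (-1) (w - 2) [] (0, 0) (0, 1) m) (hw : 3 ≤ w) :
    NNPiece (l ++ sweepTail w) (grid w) (2 - w) w [] (0, 0) (w - 2, 0) (m + (w - 2) + 3) := by
  have hrect : rect (0, 1) (shift (w - 2) (0, 1)) = w - 2 := by
    simp [rect, abs_sub_comm 2 w, abs_of_nonneg (show 0 ≤ w - 2 by linarith)]
  have hjoin : StripStep (2 - w) w (0, 1) (shift (w - 2) (0, 1)) :=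
    ⟨.inr rfl, by rw [hrect]; dsimp only; linarith, by rw [hrect]; dsimp only; linarith⟩
  have hsquare : NNPiece [(0, 1), (1, 1), (1, 0), (0, 0)] (grid 2) (-1) 2 [] (0, 1) (0, 0) 3 :=
    .of_subset_grid subset_rfl (by decide)
  have h := hL.append (hsquare.map_shift (w - 2))
    (disjoint_grid_image_shift_grid _ _) (fun p hp => .inl (le_fst_of_mem_image_shift_grid hp))
    (by simp) hjoin (fun p hp => le_lowerDist_of_le_fst_sub <| by
      rw [hrect]; dsimp only; linarith [le_fst_of_mem_image_shift_grid hp])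
    (by simp) (by linarith) (by linarith) (by linarith) (by linarith)
  rwa [grid_union_image_shift_grid (by linarith) zero_le_two, sub_add_cancel, hrect, shift_mk,
    zero_add] at h

end NNPiece

/-- Subscripts `1` and `2` mark the widths `8 * 2 ^ j - 1` and `8 * 2 ^ j - 2`. -/
structure Stage where
  cross : List (ℤ × ℤ)
  cross₁ : List (ℤ × ℤ)
  loop : List (ℤ × ℤ)
  loop₁ : List (ℤ × ℤ)
  loop₂ : List (ℤ × ℤ)

def stage : ℕ → Stage
  | 0 =>
    { cross := [(0, 0), (1, 0), (1, 1), (2, 1), (2, 0), (3, 0), (3, 1), (4, 1), (4, 0), (5, 0),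
        (5, 1), (6, 1), (7, 1), (7, 0), (6, 0)]
      cross₁ := [(0, 0), (1, 0), (1, 1), (2, 1), (3, 1), (3, 0), (2, 0), (4, 0), (4, 1), (5, 1),
        (6, 1), (6, 0), (5, 0)]
      loop := [(0, 0), (1, 0), (1, 1), (2, 1), (2, 0), (3, 0), (4, 0), (5, 0), (6, 0), (7, 0),
        (7, 1), (6, 1), (5, 1), (4, 1), (3, 1), (0, 1)]
      loop₁ := [(0, 0), (1, 0), (1, 1), (2, 1), (2, 0), (3, 0), (4, 0), (5, 0), (6, 0), (6, 1),
        (5, 1), (4, 1), (3, 1), (0, 1)]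
      loop₂ := [(0, 0), (1, 0), (1, 1), (2, 1), (2, 0), (3, 0), (4, 0), (5, 0), (5, 1), (4, 1),
        (3, 1), (0, 1)] }
  | j + 1 =>
    let s := stage j
    let w : ℤ := 8 * 2 ^ j
    { cross := s.cross ++ (s.loop₂ ++ sweepTail w).map (shift w)
      cross₁ := s.cross₁ ++ (s.loop₂ ++ sweepTail w).map (shift (w - 1))
      loop := s.cross ++ s.loop.map (shift w) ++ [(0, 1)]
      loop₁ := s.cross₁ ++ s.loop.map (shift (w - 1)) ++ [(0, 1)]
      loop₂ := s.cross₁ ++ s.loop₁.map (shift (w - 1)) ++ [(0, 1)] }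

def cross (j : ℕ) : List (ℤ × ℤ) := (stage j).cross
def cross₁ (j : ℕ) : List (ℤ × ℤ) := (stage j).cross₁
def loop (j : ℕ) : List (ℤ × ℤ) := (stage j).loop
def loop₁ (j : ℕ) : List (ℤ × ℤ) := (stage j).loop₁
def loop₂ (j : ℕ) : List (ℤ × ℤ) := (stage j).loop₂

def sweep (j : ℕ) : List (ℤ × ℤ) := loop₂ j ++ sweepTail (8 * 2 ^ j)

def cross' : ℕ → List (ℤ × ℤ)
  | 0 => [(0, 1), (0, 0), (1, 0), (2, 0), (2, 1), (3, 1), (3, 0), (4, 0), (5, 0), (5, 1), (4, 1),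
      (6, 1), (7, 1), (7, 0), (6, 0)]
  | j + 1 => cross' j ++ (sweep j).map (shift (8 * 2 ^ j))

def hook : ℕ → List (ℤ × ℤ)
  | 0 => [(0, 1), (0, 0), (1, 0), (2, 0), (2, 1), (3, 1), (3, 0), (4, 0), (5, 0), (6, 0), (7, 0),
      (7, 1), (6, 1), (5, 1), (4, 1), (1, 1)]
  | j + 1 => cross' j ++ (loop j).map (shift (8 * 2 ^ j)) ++ [(1, 1)]

def tour : ℕ → List (ℤ × ℤ)
  | 0 => [(0, 0), (0, 1), (1, 1), (1, 0), (2, 0), (3, 0), (4, 0), (4, 1), (3, 1), (2, 1)]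
  | k + 1 => tour k ++ (hook k).map (shift (8 * 2 ^ k - 3))

theorem nnPiece_cross_loop (j : ℕ) :
    NNPiece (cross j) (grid (8 * 2 ^ j) \ {(0, 1)}) (-1) (8 * 2 ^ j) [(0, 1)] (0, 0)
        (8 * 2 ^ j - 2, 0) ((4 * j + 16) * 2 ^ j - 2) ∧
      NNPiece (cross₁ j) (grid (8 * 2 ^ j - 1) \ {(0, 1)}) (-1) (8 * 2 ^ j - 1) [(0, 1)] (0, 0)
        (8 * 2 ^ j - 3, 0) ((4 * j + 16) * 2 ^ j - 3) ∧
      NNPiece (loop j) (grid (8 * 2 ^ j)) (-1) (8 * 2 ^ j) [] (0, 0) (0, 1)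
        ((4 * j + 16) * 2 ^ j + 1) ∧
      NNPiece (loop₁ j) (grid (8 * 2 ^ j - 1)) (-1) (8 * 2 ^ j - 1) [] (0, 0) (0, 1)
        ((4 * j + 16) * 2 ^ j - 1) ∧
      NNPiece (loop₂ j) (grid (8 * 2 ^ j - 2)) (-1) (8 * 2 ^ j - 2) [] (0, 0) (0, 1)
        ((4 * j + 16) * 2 ^ j - 3) := by
  induction j with
  | zero =>
    norm_num
    exact ⟨.of_subset_grid sdiff_subset (by decide), .of_subset_grid sdiff_subset (by decide),
      .of_subset_grid subset_rfl (by decide), .of_subset_grid subset_rfl (by decide),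
      .of_subset_grid subset_rfl (by decide)⟩
  | succ j ih =>
    obtain ⟨hQ, hQ₁, hE, hE₁, hE₂⟩ := ih
    have hpow : (2 : ℤ) ^ (j + 1) = 2 * 2 ^ j := pow_succ' 2 j
    have hpos : (1 : ℤ) ≤ 2 ^ j := one_le_pow₀ one_le_two
    have hS := hE₂.append_sweepTail (by linarith)
    refine ⟨?_, ?_, ?_, ?_, ?_⟩
    · convert hQ.append_map_shift hS (by ring) le_rfl (by linarith) (by linarith) (by linarith)
        using 1 <;> first | rfl | (push_cast [hpow, shift_mk]; ring_nf)
    · convert hQ₁.append_map_shift hS (by ring) le_rfl (by linarith) (by linarith) (by linarith)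
        using 1 <;> first | rfl | (push_cast [hpow, shift_mk]; ring_nf)
    · convert hQ.append_map_shift_concat hE (by ring) le_rfl (by linarith)
        (by linarith) using 1 <;> first | rfl | (push_cast [hpow, shift_mk]; ring_nf)
    · convert hQ₁.append_map_shift_concat hE (by ring) le_rfl (by linarith)
        (by linarith) using 1 <;> first | rfl | (push_cast [hpow, shift_mk]; ring_nf)
    · convert hQ₁.append_map_shift_concat hE₁ (by ring) le_rfl (by linarith)
        (by linarith) using 1 <;> first | rfl | (push_cast [hpow, shift_mk]; ring_nf)

lemma nnPiece_sweep (j : ℕ) :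
    NNPiece (sweep j) (grid (8 * 2 ^ j)) (2 - 8 * 2 ^ j) (8 * 2 ^ j) [] (0, 0) (8 * 2 ^ j - 2, 0)
      ((4 * j + 24) * 2 ^ j - 2) := by
  convert (nnPiece_cross_loop j).2.2.2.2.append_sweepTail
    (by linarith [one_le_pow₀ (M₀ := ℤ) (n := j) one_le_two]) using 1 <;> first | rfl | ring

lemma nnPiece_cross' (j : ℕ) :
    NNPiece (cross' j) (grid (8 * 2 ^ j) \ {(1, 1)}) (-1) (8 * 2 ^ j) [(1, 1)] (0, 1)
      (8 * 2 ^ j - 2, 0) ((4 * j + 16) * 2 ^ j - 1) := by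
  induction j with
  | zero => norm_num; exact .of_subset_grid sdiff_subset (by decide)
  | succ j ih =>
    have hpow : (2 : ℤ) ^ (j + 1) = 2 * 2 ^ j := pow_succ' 2 j
    have hpos : (1 : ℤ) ≤ 2 ^ j := one_le_pow₀ one_le_two
    convert ih.append_map_shift (nnPiece_sweep j) (by ring) zero_le_one (by linarith)
      (by linarith) (by linarith) using 1 <;> first | rfl | (push_cast [hpow, shift_mk]; ring_nf)

lemma nnPiece_hook (j : ℕ) :
    NNPiece (hook j) (grid (8 * 2 ^ j)) (-1) (8 * 2 ^ j) [] (0, 1) (1, 1)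
      ((4 * j + 16) * 2 ^ j + 1) := by
  cases j with
  | zero => norm_num; exact .of_subset_grid subset_rfl (by decide)
  | succ j =>
    have hpow : (2 : ℤ) ^ (j + 1) = 2 * 2 ^ j := pow_succ' 2 j
    have hpos : (1 : ℤ) ≤ 2 ^ j := one_le_pow₀ one_le_two
    convert (nnPiece_cross' j).append_map_shift_concat (nnPiece_cross_loop j).2.2.1 (by ring)
      zero_le_one (by linarith) (by linarith) using 1 <;>
      first | rfl | (push_cast [hpow, shift_mk]; ring_nf)

lemma nnPiece_tour (k : ℕ) :
    NNPiece (tour k) (grid (8 * 2 ^ k - 3)) (-1) (8 * 2 ^ k - 3) [] (0, 0) (4 * 2 ^ k - 2, 1)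
      ((4 * k + 12) * 2 ^ k - 3) := by
  induction k with
  | zero => norm_num; exact .of_subset_grid subset_rfl (by decide)
  | succ k ih =>
    have hpow : (2 : ℤ) ^ (k + 1) = 2 * 2 ^ k := pow_succ' 2 k
    have hpos : (1 : ℤ) ≤ 2 ^ k := one_le_pow₀ one_le_two
    have hrect : rect (4 * 2 ^ k - 2, 1) (shift (8 * 2 ^ k - 3) (0, 1)) = 4 * 2 ^ k - 1 := by
      simp only [rect, shift_mk, sub_self, abs_zero, add_zero]
      rw [abs_of_nonpos (by linarith)]
      ring
    have hjoin : StripStep (-1) (16 * 2 ^ k - 3) (4 * 2 ^ k - 2, 1)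
        (shift (8 * 2 ^ k - 3) (0, 1)) :=
      ⟨.inr rfl, by rw [hrect]; dsimp only; linarith, by rw [hrect]; dsimp only; linarith⟩
    have h := ih.append ((nnPiece_hook k).map_shift (8 * 2 ^ k - 3))
      (disjoint_grid_image_shift_grid _ _) (fun p hp => .inl (le_fst_of_mem_image_shift_grid hp))
      (by simp) hjoin (fun p hp => le_lowerDist_of_le_fst_sub <| by
        rw [hrect]; dsimp only; linarith [le_fst_of_mem_image_shift_grid hp])
      (by simp) le_rfl (by linarith) (by linarith) (by linarith)
    rw [grid_union_image_shift_grid (by linarith) (by linarith), hrect] at h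
    convert h using 1 <;> first | rfl | (push_cast [hpow, shift_mk]; ring_nf)

end NNRGrid

theorem nnr_partial_tour_general_metric_general (k : ℕ) (n : ℕ) (hn : n = 16 * 2 ^ k - 6)
    (V : Set (ℤ × ℤ))
    (hV : V = {p : ℤ × ℤ | 0 ≤ p.1 ∧ p.1 ≤ 8 * 2 ^ k - 4 ∧ (p.2 = 0 ∨ p.2 = 1)})
    (d : ℤ × ℤ → ℤ × ℤ → ℝ)
    (haxis : ∀ p ∈ V, ∀ q ∈ V, (p.1 = q.1 ∨ p.2 = q.2) →
      d p q = |(p.1 : ℝ) - (q.1 : ℝ)| + |(p.2 : ℝ) - (q.2 : ℝ)|)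
    (hlow : ∀ p ∈ V, ∀ q ∈ V, |(p.1 : ℝ) - (q.1 : ℝ)| ≤ d p q) :
    ∃ x : ℕ → ℤ × ℤ,
      (∀ i < n, x i ∈ V) ∧
      (∀ i < n, ∀ j < n, x i = x j → i = j) ∧
      (∀ p ∈ V, ∃ i < n, x i = p) ∧
      x 0 = (0, 0) ∧
      x (n - 1) = (4 * 2 ^ k - 2, 1) ∧
      (∀ i < n - 1, ∀ y ∈ V, (∀ j ≤ i, x j ≠ y) →
        d (x i) (x (i + 1)) ≤ d (x i) y) ∧
      ∑ i ∈ Finset.range (n - 1), d (x i) (x (i + 1))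
        = (12 + 4 * (k : ℝ)) * 2 ^ k - 3 := by
  have hpow : ((2 ^ k : ℕ) : ℤ) = 2 ^ k := by norm_num
  have hpos : 1 ≤ 2 ^ k := Nat.one_le_two_pow
  have hgrid : V = NNRGrid.grid (8 * 2 ^ k - 3) := by
    rw [hV, ← hpow]
    ext p
    simp only [Set.mem_ofPred_eq, NNRGrid.mem_grid]
    omega
  subst hgrid
  have htour := NNRGrid.nnPiece_tour k
  have hlen : (NNRGrid.tour k).length = n := by
    rw [htour.length_eq, hn, ← hpow]
    omega
  obtain ⟨x, hmem, hinj, hsurj, hfirst, hlast, hnearest, hsum⟩ := htour.exists_tour d haxis hlow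
  rw [hlen] at hmem hinj hsurj hlast hnearest hsum
  refine ⟨x, hmem, hinj, hsurj, hfirst, hlast, hnearest, ?_⟩
  rw [hsum]
  push_cast
  ring

/-- For any metric `d` on the `2 × (8·2^k − 3)` grid `V_k` satisfying
(i) distances along a common row or column are the euclidean (= rectilinear) ones, and
(ii) all distances dominate the horizontal difference, there is a partial nearest-neighbor
tour through all of `V_k` starting at `(0,0)`, ending at `(4·2^k − 2, 1)`, of total length
`(12 + 4k)·2^k − 3`. -/
theorem nnr_partial_tour_general_metric (k : ℕ) (n : ℕ) (hn : n = 16 * 2 ^ k - 6)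
    (V : Set (ℤ × ℤ))
    (hV : V = {p : ℤ × ℤ | 0 ≤ p.1 ∧ p.1 ≤ 8 * 2 ^ k - 4 ∧ (p.2 = 0 ∨ p.2 = 1)})
    (d : ℤ × ℤ → ℤ × ℤ → ℝ)
    (hsymm : ∀ p ∈ V, ∀ q ∈ V, d p q = d q p)
    (htri : ∀ p ∈ V, ∀ q ∈ V, ∀ r ∈ V, d p r ≤ d p q + d q r)
    (hzero : ∀ p ∈ V, ∀ q ∈ V, (d p q = 0 ↔ p = q))
    (haxis : ∀ p ∈ V, ∀ q ∈ V, (p.1 = q.1 ∨ p.2 = q.2) →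
      d p q = |(p.1 : ℝ) - (q.1 : ℝ)| + |(p.2 : ℝ) - (q.2 : ℝ)|)
    (hlow : ∀ p ∈ V, ∀ q ∈ V, |(p.1 : ℝ) - (q.1 : ℝ)| ≤ d p q) :
    ∃ x : ℕ → ℤ × ℤ,
      (∀ i < n, x i ∈ V) ∧
      (∀ i < n, ∀ j < n, x i = x j → i = j) ∧
      (∀ p ∈ V, ∃ i < n, x i = p) ∧
      x 0 = (0, 0) ∧
      x (n - 1) = (4 * 2 ^ k - 2, 1) ∧
      (∀ i < n - 1, ∀ y ∈ V, (∀ j ≤ i, x j ≠ y) →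
        d (x i) (x (i + 1)) ≤ d (x i) y) ∧
      ∑ i ∈ Finset.range (n - 1), d (x i) (x (i + 1))
        = (12 + 4 * (k : ℝ)) * 2 ^ k - 3 :=
  nnr_partial_tour_general_metric_general k n hn V hV d haxis hlow
end

section
/- Let k ≥ 0 and let V_k = {(x,y) ∈ ℤ² : 0 ≤ x ≤ 8·2^k − 4, y ∈ {0,1}}, with n = 16·2^k − 6 points, equipped with the rectilinear (L¹) distance d((x₁,y₁),(x₂,y₂)) = |x₁ − x₂| + |y₁ − y₂|. Then there exists an enumeration x₀, x₁, …, x_{n−1} of all points of V_k with x₀ = (0,0) and x_{n−1} = (4·2^k − 2, 1) such that for every i < n−1 and every point y ∈ V_k not among x₀,…,x_i one has d(x_i, x_{i+1}) ≤ d(x_i, y), and Σ_{i<n−1} d(x_i, x_{i+1}) = (12 + 4k)·2^k − 3. -/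
/-!
The tour is built recursively. `tour (j + 1)` runs `tour j` on the left block of width
`w = 8·2^j − 3`, jumps from its endpoint `(4·2^j − 2, 1)` to `(w, 1)`, walks down and right
through `(w, 0), (w + 1, 0), (w + 2, 0)`, runs a translate of `tour j` on the right block starting
at `(w + 3, 0)`, and returns along row 1 to `(w + 2, 1), (w + 1, 1) = (4·2^(j+1) − 2, 1)`.

All steps have length 1 except the two jumps, of length `4·2^j − 1`. Those are still
nearest-neighbour steps: on the side away from the jump target, the closest unvisited points are
in row 1 just beyond the block, at exactly the same distance (ties are allowed). So the
induction proves the nearest-neighbour property for each copy of `tour j` against every candidate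
set contained in the grid extended by everything to its right and by row 1 to its left.
The length satisfies `L (j + 1) = 2 L j + 2 (4·2^j − 1) + 5`, whence `L j = (12 + 4j)·2^j − 3`.
-/

namespace NNTour

section Path

variable {α β : Type*}

def IsNNPath [LE β] (δ : α → α → β) : Set α → List α → Prop
  | _, [] => True
  | _, [_] => True
  | S, p :: q :: l => (∀ y ∈ S, y ≠ p → δ p q ≤ δ p y) ∧ IsNNPath δ (S \ {p}) (q :: l)

def pathLength [AddMonoid β] (δ : α → α → β) : List α → β
  | [] => 0
  | [_] => 0
  | p :: q :: l => δ p q + pathLength δ (q :: l)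

section LE

variable [LE β] {δ : α → α → β}

theorem IsNNPath.mono {S S' : Set α} (hS : S' ⊆ S) :
    ∀ {l : List α}, IsNNPath δ S l → IsNNPath δ S' l
  | [], _ | [_], _ => trivial
  | _ :: _ :: _, ⟨hstep, hrest⟩ =>
    ⟨fun y hy => hstep y (hS hy), hrest.mono (Set.sdiff_subset_sdiff_left hS)⟩

theorem IsNNPath.append {S : Set α} {r : α} :
    ∀ {a l : List α}, IsNNPath δ S (a ++ [r]) → IsNNPath δ (S \ {x | x ∈ a}) l →
      l.head? = some r → IsNNPath δ S (a ++ l)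
  | [], _, _, hl, _ => hl.mono fun y hy => by simpa using hy
  | [_], l, h, hl, hr => by
    obtain ⟨l, rfl⟩ : ∃ t, l = r :: t := by cases l <;> simp_all
    exact ⟨h.1, hl.mono fun y hy => by simpa using hy⟩
  | p :: p' :: a, l, ⟨hstep, hrest⟩, hl, hr =>
    ⟨hstep, IsNNPath.append (a := p' :: a) hrest
      (hl.mono fun y hy => by
        simp only [Set.mem_sdiff, Set.mem_ofPred_eq, List.mem_cons] at hy ⊢; tauto) hr⟩

theorem IsNNPath.append_singleton {S : Set α} {l : List α} {e q : α} (h : IsNNPath δ S l)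
    (he : l.getLast? = some e) (hq : ∀ y ∈ S, y ∉ l → δ e q ≤ δ e y) :
    IsNNPath δ S (l ++ [q]) := by
  rw [← List.dropLast_append_getLast? e he] at h hq ⊢
  rw [List.append_assoc]
  refine h.append (l := [e, q]) ⟨fun y hy hye => hq y hy.1 ?_, trivial⟩ rfl
  simp_all

theorem IsNNPath.map (e : α ≃ α) (he : ∀ p q, δ (e p) (e q) = δ p q) :
    ∀ {S : Set α} {l : List α}, IsNNPath δ (e ⁻¹' S) l → IsNNPath δ S (l.map e)
  | _, [], _ | _, [_], _ => trivial
  | S, p :: q :: l, ⟨hstep, hrest⟩ => by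
    refine ⟨fun y hy hyp => ?_, IsNNPath.map e he (l := q :: l) (hrest.mono fun x hx => ?_)⟩
    · have := hstep (e.symm y) (by simpa using hy) (by rintro rfl; simp at hyp)
      rwa [← he p q, ← he p (e.symm y), e.apply_symm_apply] at this
    · simpa using hx

theorem IsNNPath.le_of_getD (x₀ : α) : ∀ {S : Set α} {l : List α}, IsNNPath δ S l →
    ∀ {i : ℕ}, i + 1 < l.length → ∀ y ∈ S, (∀ j ≤ i, l.getD j x₀ ≠ y) →
      δ (l.getD i x₀) (l.getD (i + 1) x₀) ≤ δ (l.getD i x₀) y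
  | _, [], _, _, hi, _, _, _ | _, [_], _, _, hi, _, _, _ => by simp at hi
  | _, p :: q :: l, ⟨hstep, _⟩, 0, _, y, hy, hvis =>
    hstep y hy fun h => hvis 0 le_rfl (by simp [h])
  | _, p :: q :: l, ⟨_, hrest⟩, i + 1, hi, y, hy, hvis =>
    hrest.le_of_getD x₀ (i := i) (by simpa using hi) y
      ⟨hy, fun h => hvis 0 (Nat.zero_le _) (by simpa using h.symm)⟩
      fun j hj => by simpa using hvis (j + 1) (by omega)

end LE

section Length

variable [AddCommMonoid β] (δ : α → α → β)

theorem pathLength_append {p q : α} : ∀ {a b : List α}, a.getLast? = some p → b.head? = some q →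
    pathLength δ (a ++ b) = pathLength δ a + δ p q + pathLength δ b
  | [], _, ha, _ => by simp at ha
  | [x], q' :: b, ha, hb => by
    simp_all [pathLength]
  | x :: y :: a, b, ha, hb => by
    rw [List.cons_append, List.cons_append, pathLength, ← List.cons_append,
      pathLength_append (a := y :: a) (by simpa using ha) hb, pathLength]
    abel

theorem pathLength_map (f : α → α) (hf : ∀ p q, δ (f p) (f q) = δ p q) :
    ∀ l : List α, pathLength δ (l.map f) = pathLength δ l
  | [] | [_] => rfl
  | p :: q :: l => by
    rw [List.map_cons, List.map_cons, pathLength, hf, ← List.map_cons, pathLength_map f hf,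
      pathLength]

theorem sum_range_getD_eq_pathLength (x₀ : α) : ∀ l : List α,
    ∑ i ∈ Finset.range (l.length - 1), δ (l.getD i x₀) (l.getD (i + 1) x₀) = pathLength δ l
  | [] | [_] => by simp [pathLength]
  | p :: q :: l => by
    have ih := sum_range_getD_eq_pathLength x₀ (q :: l)
    simp only [List.length_cons, Nat.add_sub_cancel] at ih ⊢
    rw [Finset.sum_range_succ', pathLength, ← ih, add_comm]
    simp only [List.getD_cons_succ, List.getD_cons_zero]

end Length

end Path

/-- The rectilinear distance, written with `natAbs` so that `omega` can reason about it. -/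
def dz (p q : ℤ × ℤ) : ℤ := (p.1 - q.1).natAbs + (p.2 - q.2).natAbs

theorem one_le_dz {p q : ℤ × ℤ} (h : p ≠ q) : 1 ≤ dz p q := by
  rw [Ne, Prod.ext_iff] at h
  simp only [dz]
  omega

theorem dz_add_right (p q v : ℤ × ℤ) : dz (p + v) (q + v) = dz p q := by
  simp only [dz, Prod.fst_add, Prod.snd_add, add_sub_add_right_eq_sub]

theorem isNNPath_of_isChain {S : Set (ℤ × ℤ)} :
    ∀ {l : List (ℤ × ℤ)}, l.IsChain (fun p q => dz p q = 1) → IsNNPath dz S l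
  | [], _ | [_], _ => trivial
  | _ :: _ :: _, h => by
    rw [List.isChain_cons_cons] at h
    exact ⟨fun y _ hy => h.1 ▸ one_le_dz hy.symm, isNNPath_of_isChain h.2⟩

def width (j : ℕ) : ℤ := 8 * 2 ^ j - 3

def endpoint (j : ℕ) : ℤ × ℤ := (4 * 2 ^ j - 2, 1)

def grid (j : ℕ) : Set (ℤ × ℤ) := {p | 0 ≤ p.1 ∧ p.1 ≤ 8 * 2 ^ j - 4 ∧ (p.2 = 0 ∨ p.2 = 1)}

/-- Besides the grid, the points to its right in every row and to its left in row 1: these are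
the candidates that can compete with the steps of a copy of `tour j` inside `tour (j + 1)`. -/
def extGrid (j : ℕ) : Set (ℤ × ℤ) := {p | p ∈ grid j ∨ width j ≤ p.1 ∨ (p.1 < 0 ∧ p.2 = 1)}

def bridge (j : ℕ) : List (ℤ × ℤ) :=
  [(width j, 1), (width j, 0), (width j + 1, 0), (width j + 2, 0)]

def offset (j : ℕ) : ℤ × ℤ := (width j + 3, 0)

def tour : ℕ → List (ℤ × ℤ)
  | 0 => [(0, 0), (0, 1), (1, 1), (1, 0), (2, 0), (3, 0), (4, 0), (4, 1), (3, 1), (2, 1)]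
  | j + 1 =>
    tour j ++ (bridge j ++ ((tour j).map (· + offset j) ++ [(width j + 2, 1), (width j + 1, 1)]))

theorem tour_head? : ∀ j, (tour j).head? = some (0, 0)
  | 0 => rfl
  | j + 1 => by simp [tour, bridge, List.head?_append, tour_head? j]

theorem tour_getLast? : ∀ j, (tour j).getLast? = some (endpoint j)
  | 0 => rfl
  | j + 1 => by
    simp only [tour, List.getLast?_append, List.getLast?_cons_cons, List.getLast?_singleton,
      Option.some_or, endpoint, width, pow_succ, Option.some.injEq, Prod.mk.injEq, and_true]
    ring

theorem length_tour : ∀ j, (tour j).length = 16 * 2 ^ j - 6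
  | 0 => rfl
  | j + 1 => by
    have : 1 ≤ 2 ^ j := Nat.one_le_two_pow
    simp only [tour, bridge, List.length_append, List.length_cons, List.length_map,
      length_tour j, List.length_nil, pow_succ]
    omega

theorem mem_map_add_right_iff {p v : ℤ × ℤ} {l : List (ℤ × ℤ)} :
    p ∈ l.map (· + v) ↔ p - v ∈ l := by
  rw [List.mem_map]
  exact ⟨fun ⟨a, ha, h⟩ => by simpa [← h] using ha, fun h => ⟨_, h, sub_add_cancel p v⟩⟩

theorem mem_tour_iff {p : ℤ × ℤ} : ∀ {j}, p ∈ tour j ↔ p ∈ grid j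
  | 0 => by
    obtain ⟨a, b⟩ := p
    simp only [tour, grid, List.mem_cons, List.not_mem_nil, or_false, Prod.ext_iff,
      Set.mem_ofPred_eq, pow_zero]
    constructor <;> omega
  | j + 1 => by
    have : (0 : ℤ) < 2 ^ j := by positivity
    obtain ⟨a, b⟩ := p
    simp only [tour, bridge, offset, List.mem_append, mem_map_add_right_iff, mem_tour_iff,
      List.mem_cons, List.not_mem_nil, or_false, grid, width, Set.mem_ofPred_eq, Prod.ext_iff,
      Prod.fst_sub, Prod.snd_sub, pow_succ]
    constructor <;> omega

theorem nodup_tour (j : ℕ) : (tour j).Nodup := by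
  have hcover : (tour j).toFinset = Finset.Icc 0 (8 * 2 ^ j - 4) ×ˢ {0, 1} := by
    ext ⟨a, b⟩
    simp [mem_tour_iff, grid, and_assoc]
  have : 1 ≤ 2 ^ j := Nat.one_le_two_pow
  have : ((2 : ℕ) : ℤ) ^ j = 2 ^ j := by norm_num
  refine Multiset.coe_nodup.1 (Multiset.toFinset_card_eq_card_iff_nodup.1 ?_)
  change (tour j).toFinset.card = (tour j).length
  rw [hcover, Finset.card_product, Int.card_Icc, length_tour]
  simp only [Finset.mem_singleton, zero_ne_one, not_false_eq_true, Finset.card_insert_of_notMem,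
    Finset.card_singleton]
  omega

theorem pathLength_tour : ∀ j : ℕ, pathLength dz (tour j) = (12 + 4 * j) * 2 ^ j - 3
  | 0 => by decide
  | j + 1 => by
    have : (0 : ℤ) < 2 ^ j := by positivity
    have hjump₁ : dz (endpoint j) (width j, 1) = 4 * 2 ^ j - 1 := by
      simp only [dz, endpoint, width]; omega
    have hjump₂ : dz (endpoint j + offset j) (width j + 2, 1) = 4 * 2 ^ j - 1 := by
      simp only [dz, endpoint, offset, width, Prod.fst_add, Prod.snd_add]; omega
    have hbridge : pathLength dz (bridge j) = 3 := by simp [bridge, pathLength, dz]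
    have hunit₁ : dz (width j + 2, 0) (offset j) = 1 := by simp [offset, dz]
    have hunit₂ : pathLength dz [(width j + 2, 1), (width j + 1, 1)] = 1 := by
      simp [pathLength, dz]
    rw [tour, pathLength_append dz (tour_getLast? j) rfl,
      pathLength_append dz (p := (width j + 2, 0)) (q := offset j) (by simp [bridge])
        (by simp [List.head?_append, tour_head?]),
      pathLength_append dz (p := endpoint j + offset j) (by simp [tour_getLast?]) rfl,
      pathLength_map dz _ fun p q => dz_add_right p q _, pathLength_tour j, hjump₁, hjump₂,
      hbridge, hunit₁, hunit₂]
    push_cast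
    ring

theorem extGrid_succ_subset (j : ℕ) : extGrid (j + 1) ⊆ extGrid j := by
  have : (0 : ℤ) < 2 ^ j := by positivity
  rintro ⟨a, b⟩ h
  simp only [extGrid, grid, width, pow_succ, Set.mem_ofPred_eq] at h ⊢
  omega

section Jumps

variable {j : ℕ} {y : ℤ × ℤ}

theorem dz_endpoint_le (hy : y ∈ extGrid (j + 1)) (hy' : y ∉ grid j) :
    dz (endpoint j) (width j, 1) ≤ dz (endpoint j) y := by
  have : (0 : ℤ) < 2 ^ j := by positivity
  obtain ⟨a, b⟩ := y
  simp only [extGrid, grid, width, endpoint, dz, pow_succ, Set.mem_ofPred_eq] at *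
  omega

theorem sub_offset_mem_extGrid (hy : y ∈ extGrid (j + 1)) (hy' : y ∉ grid j)
    (hb : y ∉ bridge j) : y - offset j ∈ extGrid j := by
  have : (0 : ℤ) < 2 ^ j := by positivity
  obtain ⟨a, b⟩ := y
  simp only [extGrid, grid, bridge, offset, width, pow_succ, Set.mem_ofPred_eq, List.mem_cons,
    List.not_mem_nil, or_false, Prod.ext_iff, Prod.fst_sub, Prod.snd_sub] at *
  omega

theorem dz_endpoint_add_offset_le (hy : y ∈ extGrid (j + 1)) (hs : y - offset j ∉ grid j) :
    dz (endpoint j + offset j) (width j + 2, 1) ≤ dz (endpoint j + offset j) y := by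
  have : (0 : ℤ) < 2 ^ j := by positivity
  obtain ⟨a, b⟩ := y
  simp only [extGrid, grid, offset, width, endpoint, dz, pow_succ, Set.mem_ofPred_eq,
    Prod.fst_add, Prod.snd_add, Prod.fst_sub, Prod.snd_sub] at *
  omega

end Jumps

theorem isNNPath_tour : ∀ (j : ℕ) {S : Set (ℤ × ℤ)}, S ⊆ extGrid j → IsNNPath dz S (tour j)
  | 0, _, _ => isNNPath_of_isChain (by decide)
  | j + 1, S, hS => by
    rw [tour]
    refine IsNNPath.append (r := (width j, 1)) ?_ ?_ rfl
    · exact (isNNPath_tour j (hS.trans (extGrid_succ_subset j))).append_singleton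
        (tour_getLast? j) fun y hy hy' => dz_endpoint_le (hS hy) (mem_tour_iff.not.1 hy')
    refine IsNNPath.append (r := offset j) (isNNPath_of_isChain (by simp [bridge, offset, dz])) ?_
      (by simp [List.head?_append, tour_head?])
    refine IsNNPath.append (r := (width j + 2, 1)) ?_ (isNNPath_of_isChain (by simp [dz])) rfl
    refine IsNNPath.append_singleton (e := endpoint j + offset j) ?_ (by simp [tour_getLast?])
      fun y hy hy' => ?_
    · rw [← Equiv.coe_addRight]
      refine (isNNPath_tour j fun y hy => ?_).map _ fun p q => dz_add_right p q _
      simp only [Set.mem_preimage, Equiv.coe_addRight, Set.mem_sdiff, Set.mem_ofPred_eq] at hy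
      simpa using sub_offset_mem_extGrid (hS hy.1.1) (mem_tour_iff.not.1 hy.1.2) hy.2
    · simp only [Set.mem_sdiff, Set.mem_ofPred_eq] at hy
      exact dz_endpoint_add_offset_le (hS hy.1.1)
        (mem_tour_iff.not.1 (mt mem_map_add_right_iff.2 hy'))

end NNTour

open NNTour

/-- On the `2 × (8·2^k − 3)` grid `V_k` with the rectilinear (L¹) distance,
there is a partial nearest-neighbor tour through all of `V_k` starting at `(0,0)`,
ending at `(4·2^k − 2, 1)`, of total length `(12 + 4k)·2^k − 3`. -/
theorem nnr_partial_tour_rectilinear (k : ℕ) (n : ℕ) (hn : n = 16 * 2 ^ k - 6)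
    (V : Set (ℤ × ℤ))
    (hV : V = {p : ℤ × ℤ | 0 ≤ p.1 ∧ p.1 ≤ 8 * 2 ^ k - 4 ∧ (p.2 = 0 ∨ p.2 = 1)})
    (d : ℤ × ℤ → ℤ × ℤ → ℝ)
    (hd : ∀ p q : ℤ × ℤ, d p q = |(p.1 : ℝ) - (q.1 : ℝ)| + |(p.2 : ℝ) - (q.2 : ℝ)|) :
    ∃ x : ℕ → ℤ × ℤ,
      (∀ i < n, x i ∈ V) ∧
      (∀ i < n, ∀ j < n, x i = x j → i = j) ∧
      (∀ p ∈ V, ∃ i < n, x i = p) ∧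
      x 0 = (0, 0) ∧
      x (n - 1) = (4 * 2 ^ k - 2, 1) ∧
      (∀ i < n - 1, ∀ y ∈ V, (∀ j ≤ i, x j ≠ y) →
        d (x i) (x (i + 1)) ≤ d (x i) y) ∧
      ∑ i ∈ Finset.range (n - 1), d (x i) (x (i + 1))
        = (12 + 4 * (k : ℝ)) * 2 ^ k - 3 := by
  subst hn hV
  have hd' : ∀ p q, d p q = dz p q := fun p q => by
    rw [hd, dz]; push_cast [Nat.cast_natAbs, Int.cast_abs]; rfl
  have hlen : (tour k).length = 16 * 2 ^ k - 6 := length_tour k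
  refine ⟨fun i => (tour k).getD i 0, fun i hi => ?_, fun i hi j hj hij => ?_, fun p hp => ?_,
    ?_, ?_, fun i hi y hy hvis => ?_, ?_⟩
  · show (tour k).getD i 0 ∈ grid k
    rw [List.getD_eq_getElem _ _ (hlen ▸ hi)]
    exact mem_tour_iff.1 (List.getElem_mem _)
  · simp only [List.getD_eq_getElem _ _ (hlen ▸ hi), List.getD_eq_getElem _ _ (hlen ▸ hj)] at hij
    exact (nodup_tour k).getElem_inj_iff.1 hij
  · obtain ⟨i, hi, rfl⟩ := List.mem_iff_getElem.1 (mem_tour_iff.2 hp)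
    exact ⟨i, hlen ▸ hi, List.getD_eq_getElem _ _ hi⟩
  · simp [List.getD_eq_getElem?_getD, ← List.head?_eq_getElem?, tour_head?]
  · simp [List.getD_eq_getElem?_getD, ← hlen, ← List.getLast?_eq_getElem?, tour_getLast?, endpoint]
  · rw [hd', hd']
    exact_mod_cast (isNNPath_tour k fun p hp => Or.inl hp).le_of_getD 0 (by omega) y hy hvis
  · simp_rw [hd', ← Int.cast_sum, ← hlen, sum_range_getD_eq_pathLength, pathLength_tour]
    push_cast
    ring
end

section
/- Let k ≥ 0 and let V_k = {(x,y) ∈ ℤ² : 0 ≤ x ≤ 8·2^k − 4, y ∈ {0,1}}, with n = 16·2^k − 6 points, equipped with the euclidean (L²) distance d((x₁,y₁),(x₂,y₂)) = √((x₁ − x₂)² + (y₁ − y₂)²). Then there exists an enumeration x₀, x₁, …, x_{n−1} of all points of V_k with x₀ = (0,0) and x_{n−1} = (4·2^k − 2, 1) such that for every i < n−1 and every point y ∈ V_k not among x₀,…,x_i one has d(x_i, x_{i+1}) ≤ d(x_i, y), and Σ_{i<n−1} d(x_i, x_{i+1}) = (12 + 4k)·2^k − 3. -/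
/-!
The tours are built recursively. A tour `T` of the `2 × (2e+1)` ladder from `(0,0)` to `(e,1)` is
followed by the rung at column `2e+1`, the bottom row up to column `2e+3`, a copy of `T` translated
by `2e+4`, and finally `(2e+3,1), (2e+2,1)`: this is a tour of the `2 × (4e+5)` ladder from `(0,0)`
to `(2e+2,1)`. Besides the steps inside the two copies of `T`, all steps have length `1` except two
jumps of length `e+1`, from `(e,1)` to `(2e+1,1)` and from `(3e+4,1)` back to `(2e+3,1)`. The
induction goes through because the nearest-neighbour property is demanded even when all points
outside the tour's columns count as unvisited: then the later blocks cannot disturb the copies of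
`T`, and both jumps stay greedy since every point still unvisited there is at horizontal distance at
least `e+1`. The lengths satisfy `L' = 2L + 2e + 7`, and `e = 4·2^k − 2` at level `k`.
-/

section NearestNeighborPath

variable {α β : Type*}

/-- The points of `E`, which lie off the path, count as unvisited at every step. -/
def IsNearestNeighborPath [Preorder β] (d : α → α → β) (E : Set α) : List α → Prop
  | a :: b :: t =>
      (∀ y ∈ E, d a b ≤ d a y) ∧ (∀ y ∈ t, d a b ≤ d a y) ∧ IsNearestNeighborPath d E (b :: t)
  | _ => True

def pathLength [AddMonoid β] (d : α → α → β) : List α → β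
  | a :: b :: t => d a b + pathLength d (b :: t)
  | _ => 0

namespace IsNearestNeighborPath

variable [Preorder β] {d : α → α → β} {E E' : Set α} {l : List α}

theorem mono (h : IsNearestNeighborPath d E' l) (hE : E ⊆ E') : IsNearestNeighborPath d E l := by
  induction l with
  | nil => trivial
  | cons a t ih =>
    match t, h, ih with
    | [], _, _ => trivial
    | b :: t, ⟨hE', ht, hbt⟩, ih => exact ⟨fun y hy => hE' y (hE hy), ht, ih hbt⟩

theorem append {l₁ l₂ : List α} {a b : α}
    (h₁ : IsNearestNeighborPath d (E ∪ {y | y ∈ l₂}) l₁) (h₂ : IsNearestNeighborPath d E l₂)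
    (ha : l₁.getLast? = some a) (hb : l₂.head? = some b)
    (hab : ∀ y ∈ E ∪ {y | y ∈ l₂}, d a b ≤ d a y) :
    IsNearestNeighborPath d E (l₁ ++ l₂) := by
  obtain ⟨t₂, rfl⟩ : ∃ t₂, l₂ = b :: t₂ := ⟨l₂.tail, (List.cons_head?_tail hb).symm⟩
  induction l₁ with
  | nil => simp at ha
  | cons x t ih =>
    match t, h₁, ha, ih with
    | [], _, ha, _ =>
      obtain rfl : x = a := by simpa using ha
      exact ⟨fun y hy => hab y (.inl hy), fun y hy => hab y (.inr (.tail _ hy)), h₂⟩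
    | z :: t, ⟨hE, ht, hzt⟩, ha, ih =>
      refine ⟨fun y hy => hE y (.inl hy), fun y hy => ?_, ih (by simpa using ha) hzt⟩
      rcases List.mem_append.mp hy with hy | hy
      · exact ht y hy
      · exact hE y (.inr hy)

theorem map {f : α → α} (hf : ∀ x y, d (f x) (f y) = d x y) (hsurj : f.Surjective)
    (h : IsNearestNeighborPath d (f ⁻¹' E) l) : IsNearestNeighborPath d E (l.map f) := by
  induction l with
  | nil => trivial
  | cons a t ih =>
    match t, h, ih with
    | [], _, _ => trivial
    | b :: t, ⟨hE, ht, hbt⟩, ih =>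
      refine ⟨fun y hy => ?_, fun y hy => ?_, ih hbt⟩
      · obtain ⟨y, rfl⟩ := hsurj y
        rw [hf, hf]
        exact hE y hy
      · obtain ⟨z, hz, rfl⟩ := List.mem_map.mp hy
        rw [hf, hf]
        exact ht z hz

theorem comp_monotone {γ : Type*} [Preorder γ] {g : β → γ} (hg : Monotone g)
    (h : IsNearestNeighborPath d E l) : IsNearestNeighborPath (fun a b => g (d a b)) E l := by
  induction l with
  | nil => trivial
  | cons a t ih =>
    match t, h, ih with
    | [], _, _ => trivial
    | b :: t, ⟨hE, ht, hbt⟩, ih =>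
      exact ⟨fun y hy => hg (hE y hy), fun y hy => hg (ht y hy), ih hbt⟩

theorem of_isChain (hnd : l.Nodup) (hl : l.IsChain fun a b => ∀ y ≠ a, d a b ≤ d a y)
    (hE : ∀ a ∈ l, a ∉ E) : IsNearestNeighborPath d E l := by
  induction l with
  | nil => trivial
  | cons a t ih =>
    match t, hnd, hl, ih with
    | [], _, _, _ => trivial
    | b :: t, hnd, hl, ih =>
      rw [List.isChain_cons_cons] at hl
      have ha : a ∉ b :: t := (List.nodup_cons.mp hnd).1
      refine ⟨fun y hy => hl.1 y ?_, fun y hy => hl.1 y ?_, ?_⟩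
      · rintro rfl; exact hE y (.head _) hy
      · rintro rfl; exact ha (.tail _ hy)
      · exact ih (List.nodup_cons.mp hnd).2 hl.2 fun c hc => hE c (.tail _ hc)

theorem le_getD (h : IsNearestNeighborPath d E l) {i : ℕ} (hi : i + 1 < l.length) {y x₀ : α}
    (hy : y ∈ l) (hnew : ∀ j ≤ i, l.getD j x₀ ≠ y) :
    d (l.getD i x₀) (l.getD (i + 1) x₀) ≤ d (l.getD i x₀) y := by
  induction l generalizing i with
  | nil => simp at hi
  | cons a t ih =>
    match t, h, hi, ih with
    | [], _, hi, _ => simp at hi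
    | b :: t, ⟨_, ht, hbt⟩, hi, ih =>
      have hya : y ∈ b :: t := by
        rcases List.mem_cons.mp hy with rfl | hy
        · exact absurd rfl (hnew 0 (Nat.zero_le _))
        · exact hy
      cases i with
      | zero =>
        rcases List.mem_cons.mp hya with rfl | hyt
        · exact le_rfl
        · exact ht y hyt
      | succ i =>
        exact ih hbt (by simpa using hi) hya fun j hj => hnew (j + 1) (by omega)

end IsNearestNeighborPath

section pathLength

variable [AddCommMonoid β] {d : α → α → β}

@[simp]
theorem pathLength_cons_cons (a b : α) (t : List α) :
    pathLength d (a :: b :: t) = d a b + pathLength d (b :: t) := rfl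

theorem pathLength_append {l₁ l₂ : List α} {a b : α} (ha : l₁.getLast? = some a)
    (hb : l₂.head? = some b) :
    pathLength d (l₁ ++ l₂) = pathLength d l₁ + d a b + pathLength d l₂ := by
  obtain ⟨t₂, rfl⟩ : ∃ t₂, l₂ = b :: t₂ := ⟨l₂.tail, (List.cons_head?_tail hb).symm⟩
  induction l₁ with
  | nil => simp at ha
  | cons x t ih =>
    match t, ha, ih with
    | [], ha, _ =>
      obtain rfl : x = a := by simpa using ha
      simp [pathLength]
    | z :: t, ha, ih =>
      rw [List.cons_append, List.cons_append, pathLength_cons_cons, ← List.cons_append,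
        ih (by simpa using ha), pathLength_cons_cons, add_assoc, add_assoc, add_assoc]

theorem pathLength_map {f : α → α} (hf : ∀ x y, d (f x) (f y) = d x y) (l : List α) :
    pathLength d (l.map f) = pathLength d l := by
  induction l with
  | nil => rfl
  | cons a t ih =>
    match t, ih with
    | [], _ => rfl
    | b :: t, ih =>
      rw [List.map_cons, List.map_cons, pathLength_cons_cons, ← List.map_cons, ih, hf,
        pathLength_cons_cons]

theorem sum_range_getD_eq_pathLength (l : List α) (x₀ : α) :
    ∑ i ∈ Finset.range (l.length - 1), d (l.getD i x₀) (l.getD (i + 1) x₀) = pathLength d l := by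
  induction l with
  | nil => rfl
  | cons a t ih =>
    match t, ih with
    | [], _ => rfl
    | b :: t, ih =>
      simp only [List.length_cons, Nat.add_sub_cancel] at ih ⊢
      rw [Finset.sum_range_succ', pathLength_cons_cons, ← ih, add_comm]
      rfl

end pathLength

end NearestNeighborPath

namespace List

variable {α : Type*} {l : List α} {i j : ℕ} {a x₀ : α}

theorem getD_mem (hi : i < l.length) (x₀ : α) : l.getD i x₀ ∈ l := by
  rw [getD_eq_getElem _ _ hi]
  exact getElem_mem hi

theorem Nodup.getD_inj (hl : l.Nodup) (hi : i < l.length) (hj : j < l.length)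
    (h : l.getD i x₀ = l.getD j x₀) : i = j := by
  rwa [getD_eq_getElem _ _ hi, getD_eq_getElem _ _ hj, hl.getElem_inj_iff] at h

theorem exists_getD_eq_of_mem (h : a ∈ l) (x₀ : α) : ∃ i < l.length, l.getD i x₀ = a := by
  obtain ⟨i, hi, rfl⟩ := mem_iff_getElem.mp h
  exact ⟨i, hi, getD_eq_getElem _ _ hi⟩

theorem getD_zero_of_head?_eq (h : l.head? = some a) (x₀ : α) : l.getD 0 x₀ = a := by
  simp [getD_eq_getElem?_getD, ← head?_eq_getElem?, h]

theorem getD_length_sub_one_of_getLast?_eq (h : l.getLast? = some a) (x₀ : α) :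
    l.getD (l.length - 1) x₀ = a := by
  simp [getD_eq_getElem?_getD, ← getLast?_eq_getElem?, h]

theorem mem_map_add_right_iff {G : Type*} [AddGroup G] {l : List G} {p v : G} :
    p ∈ l.map (· + v) ↔ p - v ∈ l := by
  simp [mem_map, ← eq_sub_iff_add_eq]

end List

def dist2 (p q : ℤ × ℤ) : ℤ := (p.1 - q.1) ^ 2 + (p.2 - q.2) ^ 2

noncomputable def eucl (p q : ℤ × ℤ) : ℝ :=
  Real.sqrt (((p.1 : ℝ) - (q.1 : ℝ)) ^ 2 + ((p.2 : ℝ) - (q.2 : ℝ)) ^ 2)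

theorem eucl_eq_sqrt_dist2 (p q : ℤ × ℤ) : eucl p q = Real.sqrt (dist2 p q) := by
  simp [eucl, dist2]

theorem dist2_add_right (p q v : ℤ × ℤ) : dist2 (p + v) (q + v) = dist2 p q := by
  simp only [dist2, Prod.fst_add, Prod.snd_add, add_sub_add_right_eq_sub]

theorem eucl_add_right (p q v : ℤ × ℤ) : eucl (p + v) (q + v) = eucl p q := by
  rw [eucl_eq_sqrt_dist2, eucl_eq_sqrt_dist2, dist2_add_right]

theorem one_le_dist2 {p q : ℤ × ℤ} (h : p ≠ q) : 1 ≤ dist2 p q := by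
  have : p.1 - q.1 ≠ 0 ∨ p.2 - q.2 ≠ 0 := by
    by_contra! h'
    exact h (Prod.ext (by omega) (by omega))
  unfold dist2
  rcases this with h1 | h1
  · nlinarith [sq_nonneg (p.2 - q.2), sq_pos_of_ne_zero h1]
  · nlinarith [sq_nonneg (p.1 - q.1), sq_pos_of_ne_zero h1]

theorem dist2_le_of_abs_le {a b r : ℤ} {y : ℤ × ℤ} (hy : |a - b| ≤ |a - y.1|) :
    dist2 (a, r) (b, r) ≤ dist2 (a, r) y := by
  have := sq_le_sq.mpr hy
  simp only [dist2, sub_self]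
  nlinarith [sq_nonneg (r - y.2)]

theorem dist2_le_of_dist2_eq_one {a b y : ℤ × ℤ} (hab : dist2 a b = 1) (hy : y ≠ a) :
    dist2 a b ≤ dist2 a y :=
  hab ▸ one_le_dist2 hy.symm

theorem isNearestNeighborPath_of_isChain_dist2_eq_one {E : Set (ℤ × ℤ)} {l : List (ℤ × ℤ)}
    (hnd : l.Nodup) (hl : l.IsChain fun a b => dist2 a b = 1) (hE : ∀ a ∈ l, a ∉ E) :
    IsNearestNeighborPath dist2 E l :=
  .of_isChain hnd (hl.imp fun _ _ hab _ => dist2_le_of_dist2_eq_one hab) hE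

theorem IsNearestNeighborPath.eucl_of_dist2 {E : Set (ℤ × ℤ)} {l : List (ℤ × ℤ)}
    (h : IsNearestNeighborPath dist2 E l) : IsNearestNeighborPath eucl E l := by
  rw [show eucl = fun p q => Real.sqrt (dist2 p q) from funext₂ eucl_eq_sqrt_dist2]
  exact h.comp_monotone (g := fun z : ℤ => Real.sqrt z)
    fun _ _ h => Real.sqrt_le_sqrt (Int.cast_le.mpr h)

def tourStep (e : ℤ) (T : List (ℤ × ℤ)) : List (ℤ × ℤ) :=
  T ++ ([(2 * e + 1, 1), (2 * e + 1, 0), (2 * e + 2, 0), (2 * e + 3, 0)] ++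
    (T.map (· + (2 * e + 4, 0)) ++ [(2 * e + 3, 1), (2 * e + 2, 1)]))

theorem length_tourStep (e : ℤ) (T : List (ℤ × ℤ)) :
    (tourStep e T).length = 2 * T.length + 6 := by
  simp only [tourStep, List.length_append, List.length_map, List.length_cons, List.length_nil]
  omega

def tour : ℕ → List (ℤ × ℤ)
  | 0 => [(0, 0), (0, 1), (1, 1), (1, 0), (2, 0), (3, 0), (4, 0), (4, 1), (3, 1), (2, 1)]
  | k + 1 => tourStep (4 * 2 ^ k - 2) (tour k)

structure IsLadderTour (e : ℤ) (l : List (ℤ × ℤ)) : Prop where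
  mem_iff : ∀ p, p ∈ l ↔ 0 ≤ p.1 ∧ p.1 ≤ 2 * e ∧ (p.2 = 0 ∨ p.2 = 1)
  nodup : l.Nodup
  head?_eq : l.head? = some (0, 0)
  getLast?_eq : l.getLast? = some (e, 1)
  isNearestNeighborPath : IsNearestNeighborPath dist2 {p | p.1 < 0 ∨ 2 * e < p.1} l

namespace IsLadderTour

variable {e : ℤ} {T : List (ℤ × ℤ)}

theorem nonneg (h : IsLadderTour e T) : 0 ≤ e :=
  ((h.mem_iff (e, 1)).mp (List.mem_of_getLast? h.getLast?_eq)).1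

theorem mem_tourStep_iff (h : IsLadderTour e T) (p : ℤ × ℤ) :
    p ∈ tourStep e T ↔ 0 ≤ p.1 ∧ p.1 ≤ 2 * (2 * e + 2) ∧ (p.2 = 0 ∨ p.2 = 1) := by
  have := h.nonneg
  simp only [tourStep, List.mem_append, List.mem_cons, List.mem_map_add_right_iff, h.mem_iff,
    List.not_mem_nil, Prod.ext_iff, Prod.fst_sub, Prod.snd_sub, or_false]
  omega

theorem nodup_tourStep (h : IsLadderTour e T) : (tourStep e T).Nodup := by
  have := h.nonneg
  simp only [tourStep, List.nodup_append, List.nodup_cons, List.mem_append, List.mem_cons,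
    List.mem_map_add_right_iff, h.mem_iff, List.not_mem_nil, Prod.ext_iff, Prod.fst_sub,
    Prod.snd_sub, or_false, List.nodup_nil, h.nodup, (h.nodup.map (add_left_injective _)), ne_eq]
  grind

theorem isNearestNeighborPath_tourStep (h : IsLadderTour e T) :
    IsNearestNeighborPath dist2 {p | p.1 < 0 ∨ 2 * (2 * e + 2) < p.1} (tourStep e T) := by
  have := h.nonneg
  have hS (p : ℤ × ℤ) : p ∈ T.map (· + (2 * e + 4, 0)) ↔
      2 * e + 4 ≤ p.1 ∧ p.1 ≤ 4 * e + 4 ∧ (p.2 = 0 ∨ p.2 = 1) := by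
    simp only [List.mem_map_add_right_iff, h.mem_iff, Prod.fst_sub, Prod.snd_sub, sub_zero]
    omega
  have hS_last : (T.map (· + ((2 * e + 4, 0) : ℤ × ℤ))).getLast? = some (3 * e + 4, 1) := by
    simp only [List.getLast?_map, h.getLast?_eq, Option.map_some, Prod.mk_add_mk, add_zero]
    ring_nf
  refine .append (h.isNearestNeighborPath.mono ?T_unvisited)
    (.append (a := (2 * e + 3, 0)) (b := (2 * e + 4, 0))
      (isNearestNeighborPath_of_isChain_dist2_eq_one ?M_nodup ?M_unit ?M_unvisited)
      (.append (.map (fun p q => dist2_add_right p q _) (add_right_surjective _)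
          (h.isNearestNeighborPath.mono ?S_unvisited))
        (isNearestNeighborPath_of_isChain_dist2_eq_one ?F_nodup ?F_unit ?F_unvisited)
        hS_last rfl ?S_to_F)
      rfl (by simp [h.head?_eq]) ?M_to_S)
    h.getLast?_eq rfl ?T_to_M
  all_goals simp only [Set.subset_def, Set.mem_union, Set.mem_ofPred_eq, Set.mem_preimage,
    List.mem_append, List.mem_cons, List.not_mem_nil, hS, or_false, Prod.ext_iff, Prod.fst_add,
    Prod.snd_add, List.nodup_cons, List.nodup_nil, List.isChain_cons_cons, List.isChain_singleton,
    and_true, true_and, not_false_eq_true]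
  case M_unit | F_unit => simp [dist2]
  case T_to_M | S_to_F =>
    intro y hy
    refine dist2_le_of_abs_le ?_
    simp only [abs_eq_max_neg]
    omega
  case M_to_S =>
    intro y hy
    refine dist2_le_of_dist2_eq_one (by simp [dist2]) fun h => ?_
    subst h
    omega
  all_goals omega

theorem pathLength_tourStep (h : IsLadderTour e T) :
    pathLength eucl (tourStep e T) = 2 * pathLength eucl T + 2 * e + 7 := by
  have : (0 : ℝ) ≤ e := by exact_mod_cast h.nonneg
  rw [tourStep, pathLength_append h.getLast?_eq rfl,
    pathLength_append (a := (2 * e + 3, 0)) (b := (2 * e + 4, 0)) rfl (by simp [h.head?_eq]),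
    pathLength_append (a := (3 * e + 4, 1)) (by simp [h.getLast?_eq]; ring) rfl,
    pathLength_map (fun p q => eucl_add_right p q _)]
  norm_num [pathLength, eucl, Real.sqrt_sq_eq_abs]
  rw [abs_of_nonpos (by linarith), abs_of_nonneg (by linarith)]
  ring

theorem tourStep (h : IsLadderTour e T) : IsLadderTour (2 * e + 2) (tourStep e T) where
  mem_iff := h.mem_tourStep_iff
  nodup := h.nodup_tourStep
  head?_eq := by simp [_root_.tourStep, h.head?_eq]
  getLast?_eq := by
    simp only [_root_.tourStep, List.getLast?_append, Option.some_or, List.getLast?_cons_cons,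
      List.getLast?_singleton]
  isNearestNeighborPath := h.isNearestNeighborPath_tourStep

end IsLadderTour

theorem isLadderTour_tour_zero : IsLadderTour 2 (tour 0) where
  mem_iff p := by
    simp only [tour, List.mem_cons, List.not_mem_nil, or_false, Prod.ext_iff]
    omega
  nodup := by decide
  head?_eq := rfl
  getLast?_eq := rfl
  isNearestNeighborPath := by
    refine isNearestNeighborPath_of_isChain_dist2_eq_one (by decide) (by decide) fun a ha => ?_
    simp only [tour, List.mem_cons, List.not_mem_nil, or_false, Prod.ext_iff] at ha
    simp only [Set.mem_ofPred_eq]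
    omega

theorem isLadderTour_tour : ∀ k, IsLadderTour (4 * 2 ^ k - 2) (tour k)
  | 0 => by simpa using isLadderTour_tour_zero
  | k + 1 => by
    rw [show (4 * 2 ^ (k + 1) - 2 : ℤ) = 2 * (4 * 2 ^ k - 2) + 2 by ring]
    exact (isLadderTour_tour k).tourStep

theorem length_tour : ∀ k, (tour k).length = 16 * 2 ^ k - 6
  | 0 => rfl
  | k + 1 => by
    rw [tour, length_tourStep, length_tour k, pow_succ]
    have := Nat.one_le_two_pow (n := k)
    omega

theorem pathLength_tour : ∀ k, pathLength eucl (tour k) = (12 + 4 * (k : ℝ)) * 2 ^ k - 3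
  | 0 => by norm_num [tour, pathLength, eucl]
  | k + 1 => by
    rw [tour, (isLadderTour_tour k).pathLength_tourStep, pathLength_tour k]
    push_cast
    ring

/-- On the `2 × (8·2^k − 3)` grid `V_k` with the euclidean (L²) distance,
there is a partial nearest-neighbor tour through all of `V_k` starting at `(0,0)`,
ending at `(4·2^k − 2, 1)`, of total length `(12 + 4k)·2^k − 3`. -/
theorem nnr_partial_tour_euclidean (k : ℕ) (n : ℕ) (hn : n = 16 * 2 ^ k - 6)
    (V : Set (ℤ × ℤ))
    (hV : V = {p : ℤ × ℤ | 0 ≤ p.1 ∧ p.1 ≤ 8 * 2 ^ k - 4 ∧ (p.2 = 0 ∨ p.2 = 1)})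
    (d : ℤ × ℤ → ℤ × ℤ → ℝ)
    (hd : ∀ p q : ℤ × ℤ,
      d p q = Real.sqrt (((p.1 : ℝ) - (q.1 : ℝ)) ^ 2 + ((p.2 : ℝ) - (q.2 : ℝ)) ^ 2)) :
    ∃ x : ℕ → ℤ × ℤ,
      (∀ i < n, x i ∈ V) ∧
      (∀ i < n, ∀ j < n, x i = x j → i = j) ∧
      (∀ p ∈ V, ∃ i < n, x i = p) ∧
      x 0 = (0, 0) ∧
      x (n - 1) = (4 * 2 ^ k - 2, 1) ∧
      (∀ i < n - 1, ∀ y ∈ V, (∀ j ≤ i, x j ≠ y) →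
        d (x i) (x (i + 1)) ≤ d (x i) y) ∧
      ∑ i ∈ Finset.range (n - 1), d (x i) (x (i + 1))
        = (12 + 4 * (k : ℝ)) * 2 ^ k - 3 := by
  obtain ⟨hmem, hnodup, hhead, hlast, hnnr⟩ := isLadderTour_tour k
  have hV : ∀ p, p ∈ V ↔ p ∈ tour k := by
    intro p
    rw [hmem, hV, Set.mem_ofPred_eq]
    ring_nf
  obtain rfl : d = eucl := funext₂ hd
  obtain rfl : n = (tour k).length := hn.trans (length_tour k).symm
  refine ⟨fun i => (tour k).getD i (0, 0), fun i hi => (hV _).mpr (List.getD_mem hi _),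
    fun i hi j hj => hnodup.getD_inj hi hj, fun p hp => List.exists_getD_eq_of_mem ((hV p).mp hp) _,
    List.getD_zero_of_head?_eq hhead _, List.getD_length_sub_one_of_getLast?_eq hlast _,
    fun i hi y hy hnew => ?_, ?_⟩
  · exact (hnnr.mono (Set.empty_subset _)).eucl_of_dist2.le_getD (by omega) ((hV y).mp hy) hnew
  · rw [sum_range_getD_eq_pathLength, pathLength_tour]
end

section
/- Let k ≥ 0, let V_k = {(x,y) ∈ ℤ² : 0 ≤ x ≤ 8·2^k − 4, y ∈ {0,1}} with n = 16·2^k − 6 points, equipped with the rectilinear (L¹) distance d. Then there exists an NNR tour of V_k starting at (0,0) of total (closed-tour) length at least (12 + 4k)·2^k − 3, while every traveling salesman tour of V_k has length at least n and some tour has length exactly n. In particular the ratio of the length of this NNR tour to the optimum tour length is at least (log₂ n − 1)/4. -/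
/-!
The long tour is built recursively from gadgets: NNR paths through a `2 × (2m+3)` strip that start
in column `0`, end in the middle column `m`, and never step farther than the columns just outside
the strip. Two gadgets of half-width `m` side by side, joined by a three-column bridge and followed
by one point left in the bridge's first column, form a gadget of half-width `2m+3`: the walk jumps
`m + 3` from the middle of the left gadget into the bridge, crosses it, walks the right gadget and
jumps `m + 3` back from its middle to the leftover point, the new middle. The right gadget has to
start in the row where the bridge ends, so gadgets ending in either row are built together, using
the reflection `flip`. Each doubling thus adds the width once more to twice the old length, which
gives length `(4k + 12)·2^k - 3` on `n = 16·2^k - 6` points; every tour has length at least `n`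
since distinct lattice points are at distance at least `1`, and the boustrophedon `snake` has
length exactly `n`.
-/

namespace NNRTour

open Finset

section Paths

variable {α β : Type*}

/-- For a list enumerating all points, this says that it is an NNR tour. -/
def IsNNRPath [LE β] (d : α → α → β) : List α → Prop
  | p :: q :: rest => (∀ r ∈ rest, d p q ≤ d p r) ∧ IsNNRPath d (q :: rest)
  | _ => True

instance decidableIsNNRPath [LE β] [DecidableRel ((· ≤ ·) : β → β → Prop)] (d : α → α → β) :
    ∀ L, Decidable (IsNNRPath d L)
  | [] => isTrue trivial
  | [_] => isTrue trivial
  | p :: q :: rest =>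
    haveI := decidableIsNNRPath d (q :: rest)
    inferInstanceAs (Decidable ((∀ r ∈ rest, d p q ≤ d p r) ∧ IsNNRPath d (q :: rest)))

theorem isNNRPath_map [LE β] (d : α → α → β) (f : α → α) :
    ∀ L : List α, IsNNRPath d (L.map f) ↔ IsNNRPath (fun a b => d (f a) (f b)) L
  | [] | [_] => Iff.rfl
  | p :: q :: rest => by
    rw [List.map_cons, List.map_cons, IsNNRPath, ← List.map_cons, isNNRPath_map d f (q :: rest),
      List.forall_mem_map, IsNNRPath]

theorem IsNNRPath.append [LE β] {d : α → α → β} :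
    ∀ {L₁ L₂ : List α}, IsNNRPath d L₁ → (∀ p ∈ L₁.getLast?, IsNNRPath d (p :: L₂)) →
      L₁.IsChain (fun p q => ∀ r ∈ L₂, d p q ≤ d p r) → IsNNRPath d L₂ →
      IsNNRPath d (L₁ ++ L₂)
  | [], _, _, _, _, h₂ => h₂
  | [p], _, _, hjoin, _, _ => hjoin p rfl
  | p :: q :: rest, L₂, h₁, hjoin, hsteps, h₂ => by
    rw [List.isChain_cons_cons] at hsteps
    refine ⟨fun r hr => ?_, IsNNRPath.append h₁.2 (by simpa using hjoin) hsteps.2 h₂⟩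
    rcases List.mem_append.mp hr with hr | hr
    exacts [h₁.1 r hr, hsteps.1 r hr]

theorem IsNNRPath.le_getElem [LE β] {d : α → α → β} :
    ∀ {L : List α}, IsNNRPath d L → ∀ {i j : ℕ} (hij : i + 1 < j) (hj : j < L.length),
      d L[i] L[i + 1] ≤ d L[i] L[j]
  | [], _, _, _, _, hj => absurd hj (Nat.not_lt_zero _)
  | [_], _, _, _, hij, hj => by simp at hj; omega
  | _ :: _ :: _, _, 0, 0, hij, _ | _ :: _ :: _, _, 0, 1, hij, _ => by omega
  | p :: q :: rest, h, 0, j + 2, _, hj => h.1 _ (List.getElem_mem _)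
  | p :: q :: rest, h, i + 1, j + 1, hij, hj =>
    h.2.le_getElem (i := i) (j := j) (by omega) (by simpa using hj)

theorem IsNNRPath.le_of_forall_getD_ne [Preorder β] {d : α → α → β} {L : List α}
    (h : IsNNRPath d L) {a y : α} (hy : y ∈ L) {i : ℕ} (hi : i + 1 < L.length)
    (hnot : ∀ j ≤ i, L.getD j a ≠ y) : d (L.getD i a) (L.getD (i + 1) a) ≤ d (L.getD i a) y := by
  obtain ⟨j, hj, rfl⟩ := List.getElem_of_mem hy
  have hij : i < j := by
    by_contra! hji
    exact hnot j hji (List.getD_eq_getElem _ _ hj)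
  rw [List.getD_eq_getElem _ _ hi, List.getD_eq_getElem _ _ (by omega)]
  rcases (Nat.succ_le_of_lt hij).eq_or_lt with rfl | hij
  · exact le_rfl
  · exact h.le_getElem hij hj

def pathLength [AddMonoid β] (d : α → α → β) : List α → β
  | p :: q :: rest => d p q + pathLength d (q :: rest)
  | _ => 0

theorem pathLength_map [AddMonoid β] (d : α → α → β) (f : α → α) :
    ∀ L : List α, pathLength d (L.map f) = pathLength (fun a b => d (f a) (f b)) L
  | [] | [_] => rfl
  | p :: q :: rest => by
    rw [List.map_cons, List.map_cons, pathLength, ← List.map_cons, pathLength_map d f (q :: rest),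
      pathLength]

theorem pathLength_append [AddMonoid β] (d : α → α → β) {a b : α} :
    ∀ {L₁ L₂ : List α}, L₁.getLast? = some a → L₂.head? = some b →
      pathLength d (L₁ ++ L₂) = pathLength d L₁ + d a b + pathLength d L₂
  | [p], b' :: L₂, ha, hb => by
    simp_all [pathLength]
  | p :: q :: rest, L₂, ha, hb => by
    simp only [List.cons_append, pathLength]
    rw [← List.cons_append, pathLength_append d (L₁ := q :: rest) (by simpa using ha) hb,
      add_assoc, add_assoc, add_assoc]

theorem sum_range_getD_eq_pathLength [AddCommMonoid β] (d : α → α → β) (a : α) :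
    ∀ L : List α, ∑ i ∈ range (L.length - 1), d (L.getD i a) (L.getD (i + 1) a) = pathLength d L
  | [] | [_] => rfl
  | p :: q :: rest => by
    have ih := sum_range_getD_eq_pathLength d a (q :: rest)
    simp only [List.length_cons, Nat.add_sub_cancel, List.getD_cons_succ] at ih ⊢
    rw [sum_range_succ', pathLength, ← ih, add_comm]
    simp only [List.getD_cons_succ, List.getD_cons_zero]

end Paths

def rectDist (p q : ℤ × ℤ) : ℤ := |p.1 - q.1| + |p.2 - q.2|

theorem one_le_rectDist {p q : ℤ × ℤ} (h : p ≠ q) : 1 ≤ rectDist p q := by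
  have : p.1 ≠ q.1 ∨ p.2 ≠ q.2 := by
    contrapose! h
    exact Prod.ext h.1 h.2
  simp only [rectDist, Int.abs_eq_natAbs]
  omega

def shift (c : ℤ) (p : ℤ × ℤ) : ℤ × ℤ := (p.1 + c, p.2)

def flip (p : ℤ × ℤ) : ℤ × ℤ := (p.1, 1 - p.2)

theorem rectDist_shift (c : ℤ) (p q : ℤ × ℤ) : rectDist (shift c p) (shift c q) = rectDist p q := by
  simp only [rectDist, shift, add_sub_add_right_eq_sub]

theorem rectDist_flip (p q : ℤ × ℤ) : rectDist (flip p) (flip q) = rectDist p q := by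
  simp only [rectDist, flip, sub_sub_sub_cancel_left, abs_sub_comm q.2]

noncomputable def strip (w : ℤ) : Finset (ℤ × ℤ) := Ico 0 w ×ˢ {0, 1}

theorem mem_strip {w : ℤ} {p : ℤ × ℤ} : p ∈ strip w ↔ 0 ≤ p.1 ∧ p.1 < w ∧ (p.2 = 0 ∨ p.2 = 1) := by
  simp [strip, and_assoc]

theorem card_strip (w : ℤ) : #(strip w) = 2 * w.toNat := by
  simp [strip, mul_comm]

theorem exists_eq_of_mem_strip {w : ℤ} {n : ℕ} (hn : (n : ℤ) = 2 * w) {x : ℕ → ℤ × ℤ}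
    (hmem : ∀ i < n, x i ∈ strip w) (hinj : ∀ i < n, ∀ j < n, x i = x j → i = j) :
    ∀ p ∈ strip w, ∃ i < n, x i = p := by
  have hsurj := surjOn_of_injOn_of_card_le x (s := range n) (t := strip w)
    (fun i hi => hmem i (mem_range.mp hi))
    (fun i hi j hj => hinj i (mem_range.mp hi) j (mem_range.mp hj))
    (by rw [card_strip, card_range]; omega)
  intro p hp
  obtain ⟨i, hi, rfl⟩ := hsurj hp
  exact ⟨i, mem_range.mp hi, rfl⟩

section Gadget

/-- `steps_le`: no step is longer than the distance to column `2m+3` on the right or to column `-3`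
on the left, so points placed there never undercut the path's choices. -/
structure IsGadget (m s e S : ℤ) (L : List (ℤ × ℤ)) : Prop where
  nodup : L.Nodup
  mem_strip_of_mem : ∀ p ∈ L, p ∈ strip (2 * m + 3)
  length_eq : (L.length : ℤ) = 2 * (2 * m + 3)
  nnr : IsNNRPath rectDist L
  head_eq : L.head? = some (0, s)
  getLast_eq : L.getLast? = some (m, e)
  steps_le : L.IsChain fun p q => rectDist p q ≤ 2 * m + 3 - p.1 ∧ rectDist p q ≤ p.1 + 3
  le_pathLength : S ≤ pathLength rectDist L

variable {m r s e S SA SB : ℤ} {L A B : List (ℤ × ℤ)}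

theorem IsGadget.mono (h : IsGadget m s e S L) {S' : ℤ} (hS : S' ≤ S) : IsGadget m s e S' L :=
  { h with le_pathLength := hS.trans h.le_pathLength }

theorem flip_injective : Function.Injective flip := fun p q h => by
  simp only [flip, Prod.mk.injEq] at h
  exact Prod.ext h.1 (by omega)

theorem IsGadget.map_flip (h : IsGadget m s e S L) : IsGadget m (1 - s) (1 - e) S (L.map flip) where
  nodup := h.nodup.map flip_injective
  mem_strip_of_mem := by
    simp only [List.mem_map, forall_exists_index, and_imp, forall_apply_eq_imp_iff₂, mem_strip,
      flip]
    intro p hp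
    have := mem_strip.mp (h.mem_strip_of_mem p hp)
    omega
  length_eq := by simpa using h.length_eq
  nnr := by simpa only [isNNRPath_map, rectDist_flip] using h.nnr
  head_eq := by simp [h.head_eq, flip]
  getLast_eq := by simp [List.getLast?_map, h.getLast_eq, flip]
  steps_le := by
    rw [List.isChain_map]
    simp only [rectDist_flip]
    exact h.steps_le
  le_pathLength := by simpa only [pathLength_map, rectDist_flip] using h.le_pathLength

theorem IsGadget.width_pos (h : IsGadget m s e S L) : 0 < 2 * m + 3 :=
  (mem_strip.mp (h.mem_strip_of_mem _ (List.mem_of_mem_head? h.head_eq))).2.1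

def bridge (w r : ℤ) : List (ℤ × ℤ) :=
  [(w, r), (w + 1, r), (w + 1, 1 - r), (w + 2, 1 - r), (w + 2, r)]

def glueRight (m r : ℤ) (B : List (ℤ × ℤ)) : List (ℤ × ℤ) :=
  bridge (2 * m + 3) r ++ (B.map (shift (2 * m + 6)) ++ [(2 * m + 3, 1 - r)])

def glue (m r : ℤ) (A B : List (ℤ × ℤ)) : List (ℤ × ℤ) := A ++ glueRight m r B

theorem shift_injective (c : ℤ) : Function.Injective (shift c) := fun p q h => by
  simp only [shift, Prod.mk.injEq, add_left_inj] at h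
  exact Prod.ext h.1 h.2

theorem mem_map_shift_append {B : List (ℤ × ℤ)} (hB : ∀ p ∈ B, p ∈ strip (2 * m + 3)) {x : ℤ × ℤ}
    (hx : x ∈ B.map (shift (2 * m + 6)) ++ [(2 * m + 3, 1 - r)]) :
    (2 * m + 6 ≤ x.1 ∧ x.1 < 4 * m + 9 ∧ (x.2 = 0 ∨ x.2 = 1)) ∨ x = (2 * m + 3, 1 - r) := by
  simp only [List.mem_append, List.mem_map, List.mem_singleton] at hx
  rcases hx with ⟨p, hp, rfl⟩ | rfl
  · have := mem_strip.mp (hB p hp)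
    simp only [shift]
    omega
  · exact Or.inr rfl

theorem le_fst_of_mem_glueRight {B : List (ℤ × ℤ)} (hB : ∀ p ∈ B, p ∈ strip (2 * m + 3))
    {x : ℤ × ℤ} (hx : x ∈ glueRight m r B) : 2 * m + 3 ≤ x.1 := by
  rcases List.mem_append.mp hx with hx | hx
  · simp only [bridge, List.mem_cons, List.not_mem_nil, or_false] at hx
    rcases hx with rfl | rfl | rfl | rfl | rfl <;> simp
  · rcases mem_map_shift_append hB hx with h | rfl
    exacts [by omega, le_rfl]

theorem glueRight_nodup (hB : IsGadget m r (1 - r) SB B) : (glueRight m r B).Nodup := by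
  refine List.nodup_append.mpr ⟨by simp [bridge]; omega,
    List.nodup_append.mpr ⟨hB.nodup.map (shift_injective _), List.nodup_singleton _, ?_⟩, ?_⟩
  · simp only [List.mem_map, List.mem_singleton]
    rintro _ ⟨p, hp, rfl⟩ _ rfl h
    have := mem_strip.mp (hB.mem_strip_of_mem p hp)
    simp only [shift, Prod.mk.injEq] at h
    omega
  · intro a ha b hb
    rcases mem_map_shift_append hB.mem_strip_of_mem hb with h | rfl <;>
      simp only [bridge, List.mem_cons, List.not_mem_nil, or_false] at ha <;>
      rcases ha with rfl | rfl | rfl | rfl | rfl <;> simp [Prod.ext_iff] <;> omega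

theorem glue_nodup (hA : IsGadget m 0 r SA A) (hB : IsGadget m r (1 - r) SB B) :
    (glue m r A B).Nodup := by
  refine List.nodup_append.mpr ⟨hA.nodup, glueRight_nodup hB, fun a ha b hb h => ?_⟩
  have := mem_strip.mp (hA.mem_strip_of_mem a ha)
  have := le_fst_of_mem_glueRight hB.mem_strip_of_mem hb
  subst h
  omega

theorem glue_mem_strip (hr : r = 0 ∨ r = 1) (hA : IsGadget m 0 r SA A)
    (hB : IsGadget m r (1 - r) SB B) : ∀ x ∈ glue m r A B, x ∈ strip (2 * (2 * m + 3) + 3) := by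
  have := hA.width_pos
  intro x hx
  rw [mem_strip]
  rw [glue, glueRight, List.mem_append, List.mem_append] at hx
  rcases hx with hx | hx | hx
  · have := mem_strip.mp (hA.mem_strip_of_mem x hx)
    omega
  · simp only [bridge, List.mem_cons, List.not_mem_nil, or_false] at hx
    rcases hx with rfl | rfl | rfl | rfl | rfl <;> omega
  · rcases mem_map_shift_append hB.mem_strip_of_mem hx with h | rfl <;> omega

theorem glueRight_isNNRPath (hr : r = 0 ∨ r = 1) (hB : IsGadget m r (1 - r) SB B) :
    IsNNRPath rectDist (glueRight m r B) := by
  obtain ⟨Bt, rfl⟩ := List.head?_eq_some_iff.mp hB.head_eq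
  have hT (x : ℤ × ℤ) (hx : x ∈ ((0, r) :: Bt).map (shift (2 * m + 6)) ++ [(2 * m + 3, 1 - r)]) :=
    mem_map_shift_append hB.mem_strip_of_mem hx
  have hz : IsNNRPath rectDist
      (((0, r) :: Bt).map (shift (2 * m + 6)) ++ [(2 * m + 3, 1 - r)]) := by
    -- the final point is `p.1 + 3` away from (the shifted) `p ∈ B`, beyond the reach of its step
    refine IsNNRPath.append ?_ (fun _ _ => ⟨by simp, trivial⟩) ?_ trivial
    · simpa only [isNNRPath_map, rectDist_shift] using hB.nnr
    · rw [List.isChain_map]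
      refine hB.steps_le.imp fun p q h => ?_
      simp only [rectDist_shift, List.mem_singleton, forall_eq]
      simp only [rectDist, Int.abs_eq_natAbs, shift] at h ⊢
      omega
  refine IsNNRPath.append (L₁ := bridge _ r) ?_ ?_ ?_ hz
  · simp only [bridge, IsNNRPath, List.mem_cons, List.not_mem_nil, forall_eq_or_imp, rectDist,
      Int.abs_eq_natAbs]
    rcases hr with rfl | rfl <;> simp
  · simp only [bridge, List.getLast?_cons_cons, List.getLast?_singleton, Option.mem_def,
      Option.some.injEq, forall_eq']
    refine ⟨fun x hx => ?_, hz⟩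
    rcases hT x (List.mem_cons_of_mem _ hx) with h | rfl <;>
      simp only [shift, rectDist, Int.abs_eq_natAbs] <;> omega
  · simp only [bridge, List.isChain_cons_cons, List.isChain_singleton, and_true]
    refine ⟨?_, ?_, ?_, ?_⟩ <;> intro x hx <;> rcases hT x hx with h | rfl <;>
      simp only [rectDist, Int.abs_eq_natAbs] <;> omega

theorem glue_isNNRPath (hr : r = 0 ∨ r = 1) (hA : IsGadget m 0 r SA A)
    (hB : IsGadget m r (1 - r) SB B) : IsNNRPath rectDist (glue m r A B) := by
  have hright {x : ℤ × ℤ} (hx : x ∈ glueRight m r B) :=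
    le_fst_of_mem_glueRight hB.mem_strip_of_mem hx
  -- everything after `A` lies in columns `≥ 2m+3`, beyond the reach of `A`'s steps
  refine IsNNRPath.append hA.nnr ?_ ?_ (glueRight_isNNRPath hr hB)
  · simp only [hA.getLast_eq, Option.mem_def, Option.some.injEq, forall_eq']
    have h := glueRight_isNNRPath hr hB
    obtain ⟨rest, hrest⟩ : ∃ rest, glueRight m r B = (2 * m + 3, r) :: rest := ⟨_, rfl⟩
    rw [hrest] at h hright ⊢
    refine ⟨fun x hx => ?_, h⟩
    have := hright (List.mem_cons_of_mem _ hx)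
    have := hA.width_pos
    simp only [rectDist, Int.abs_eq_natAbs]
    omega
  · refine hA.steps_le.imp fun p q h x hx => ?_
    have := hright hx
    simp only [rectDist, Int.abs_eq_natAbs] at h ⊢
    omega

theorem glueRight_steps_le (hr : r = 0 ∨ r = 1) (hB : IsGadget m r (1 - r) SB B) :
    (glueRight m r B).IsChain fun p q =>
      rectDist p q ≤ 2 * (2 * m + 3) + 3 - p.1 ∧ rectDist p q ≤ p.1 + 3 := by
  have := hB.width_pos
  refine List.isChain_append.mpr
    ⟨?_, List.isChain_append.mpr ⟨?_, List.isChain_singleton _, ?_⟩, ?_⟩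
  · simp only [bridge, List.isChain_cons_cons, List.isChain_singleton, and_true, rectDist,
      Int.abs_eq_natAbs]
    rcases hr with rfl | rfl <;> omega
  · rw [List.isChain_map]
    refine hB.steps_le.imp fun p q h => ?_
    rw [rectDist_shift]
    simp only [shift]
    omega
  · simp only [List.getLast?_map, hB.getLast_eq, Option.map_some, List.head?_cons,
      Option.mem_def, Option.some.injEq, forall_eq', shift, rectDist, Int.abs_eq_natAbs]
    omega
  · simp only [bridge, List.getLast?_cons_cons, List.getLast?_singleton, List.head?_append,
      List.head?_map, hB.head_eq, Option.map_some, Option.some_or, Option.mem_def,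
      Option.some.injEq, forall_eq', shift, rectDist, Int.abs_eq_natAbs]
    omega

theorem glue_steps_le (hr : r = 0 ∨ r = 1) (hA : IsGadget m 0 r SA A)
    (hB : IsGadget m r (1 - r) SB B) :
    (glue m r A B).IsChain fun p q =>
      rectDist p q ≤ 2 * (2 * m + 3) + 3 - p.1 ∧ rectDist p q ≤ p.1 + 3 := by
  have := hA.width_pos
  refine List.isChain_append.mpr ⟨hA.steps_le.imp fun p q h => ⟨by omega, h.2⟩,
    glueRight_steps_le hr hB, ?_⟩
  simp only [hA.getLast_eq, glueRight, bridge, List.cons_append, List.head?_cons, Option.mem_def,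
    Option.some.injEq, forall_eq', rectDist, Int.abs_eq_natAbs]
  omega

theorem glue_pathLength (hA : IsGadget m 0 r SA A) (hB : IsGadget m r (1 - r) SB B) :
    SA + SB + 2 * m + 11 ≤ pathLength rectDist (glue m r A B) := by
  have hSA := hA.le_pathLength
  have hSB := hB.le_pathLength
  rw [glue, pathLength_append _ hA.getLast_eq (b := (2 * m + 3, r)) (by simp [glueRight, bridge]),
    glueRight, pathLength_append _ (a := (2 * m + 3 + 2, r)) (b := shift (2 * m + 6) (0, r))
      (by simp [bridge]) (by simp [hB.head_eq, shift]),
    pathLength_append _ (a := shift (2 * m + 6) (m, 1 - r)) (b := (2 * m + 3, 1 - r))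
      (by simp [hB.getLast_eq]) rfl, pathLength_map]
  simp only [rectDist_shift]
  generalize pathLength rectDist A = PA at hSA ⊢
  generalize pathLength rectDist B = PB at hSB ⊢
  simp only [bridge, pathLength, shift, rectDist, Int.abs_eq_natAbs]
  omega

theorem IsGadget.glue (hr : r = 0 ∨ r = 1) (hA : IsGadget m 0 r SA A)
    (hB : IsGadget m r (1 - r) SB B) :
    IsGadget (2 * m + 3) 0 (1 - r) (SA + SB + 2 * m + 11) (glue m r A B) where
  nodup := glue_nodup hA hB
  mem_strip_of_mem := glue_mem_strip hr hA hB
  length_eq := by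
    have := hA.length_eq
    have := hB.length_eq
    simp only [NNRTour.glue, glueRight, bridge, List.length_append, List.length_cons,
      List.length_map, List.length_nil]
    omega
  nnr := glue_isNNRPath hr hA hB
  head_eq := by simp [NNRTour.glue, List.head?_append, hA.head_eq]
  getLast_eq := by simp [NNRTour.glue, glueRight]
  steps_le := glue_steps_le hr hA hB
  le_pathLength := glue_pathLength hA hB

/-- No gadget of half-width `1` ends at `(1, 1)`, so the recursion starts at half-width `5`. -/
def baseGadget₀ : List (ℤ × ℤ) :=
  [(0, 0), (0, 1), (1, 1), (1, 0), (2, 0), (3, 0), (4, 0), (4, 1), (3, 1), (2, 1),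
   (5, 1), (6, 1), (6, 0), (7, 0), (7, 1),
   (8, 1), (9, 1), (10, 1), (11, 1), (12, 1), (12, 0), (11, 0), (10, 0), (9, 0), (8, 0),
   (5, 0)]

def baseGadget₁ : List (ℤ × ℤ) :=
  [(0, 0), (0, 1), (1, 1), (2, 1), (3, 1), (4, 1), (4, 0), (3, 0), (2, 0), (1, 0),
   (5, 0), (6, 0), (6, 1), (7, 1), (7, 0),
   (8, 0), (9, 0), (10, 0), (11, 0), (12, 0), (12, 1), (11, 1), (10, 1), (9, 1), (8, 1),
   (5, 1)]

theorem isGadget_baseGadget₀ : IsGadget 5 0 0 29 baseGadget₀ where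
  nodup := by decide
  mem_strip_of_mem := by simp only [mem_strip]; decide
  length_eq := rfl
  nnr := by decide
  head_eq := rfl
  getLast_eq := rfl
  steps_le := by decide
  le_pathLength := by decide

theorem isGadget_baseGadget₁ : IsGadget 5 0 1 30 baseGadget₁ where
  nodup := by decide
  mem_strip_of_mem := by simp only [mem_strip]; decide
  length_eq := rfl
  nnr := by decide
  head_eq := rfl
  getLast_eq := rfl
  steps_le := by decide
  le_pathLength := by decide

theorem exists_isGadget {k : ℕ} (hk : 1 ≤ k) {e : ℤ} (he : e = 0 ∨ e = 1) :
    ∃ L, IsGadget (4 * 2 ^ k - 3) 0 e ((4 * k + 8) * 2 ^ k - 4 + 3 * e) L := by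
  induction k, hk using Nat.le_induction generalizing e with
  | base =>
    rcases he with rfl | rfl
    · exact ⟨_, isGadget_baseGadget₀.mono (by norm_num)⟩
    · exact ⟨_, isGadget_baseGadget₁.mono (by norm_num)⟩
  | succ k _ ih =>
    obtain ⟨L₀, h₀⟩ := ih (Or.inl rfl)
    obtain ⟨L₁, h₁⟩ := ih (Or.inr rfl)
    rw [show (4 * 2 ^ (k + 1) - 3 : ℤ) = 2 * (4 * 2 ^ k - 3) + 3 by ring]
    rcases he with rfl | rfl
    · refine ⟨_, (h₁.glue (Or.inr rfl) h₁.map_flip).mono ?_⟩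
      push_cast
      ring_nf
      linarith
    · refine ⟨_, (h₀.glue (Or.inl rfl) h₁).mono ?_⟩
      push_cast
      ring_nf
      linarith

def smallGadget : List (ℤ × ℤ) :=
  [(0, 0), (0, 1), (1, 1), (2, 1), (3, 1), (4, 1), (4, 0), (3, 0), (2, 0), (1, 0)]

theorem isGadget_smallGadget : IsGadget 1 0 0 9 smallGadget where
  nodup := by decide
  mem_strip_of_mem := by simp only [mem_strip]; decide
  length_eq := rfl
  nnr := by decide
  head_eq := rfl
  getLast_eq := rfl
  steps_le := by decide
  le_pathLength := by decide

theorem exists_isGadget_le_closedLength (k : ℕ) :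
    ∃ L e S, IsGadget (4 * 2 ^ k - 3) 0 e S L ∧
      (12 + 4 * k) * 2 ^ k - 3 ≤ S + rectDist (4 * 2 ^ k - 3, e) (0, 0) := by
  rcases Nat.eq_zero_or_pos k with rfl | hk
  · exact ⟨_, _, _, isGadget_smallGadget, by decide⟩
  obtain ⟨L, hL⟩ := exists_isGadget hk (Or.inr rfl)
  refine ⟨L, _, _, hL, ?_⟩
  have : (1 : ℤ) ≤ 2 ^ k := one_le_pow₀ (by norm_num)
  simp only [rectDist, sub_zero, abs_one, abs_of_nonneg (show (0 : ℤ) ≤ 4 * 2 ^ k - 3 by omega)]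
  exact le_of_eq (by ring)

end Gadget

theorem natCast_le_sum_rectDist_cyclic {n : ℕ} (hn : 2 ≤ n) {y : ℕ → ℤ × ℤ}
    (hinj : ∀ i < n, ∀ j < n, y i = y j → i = j) :
    (n : ℤ) ≤ ∑ i ∈ range n, rectDist (y i) (y ((i + 1) % n)) := by
  have hstep : ∀ i ∈ range n, 1 ≤ rectDist (y i) (y ((i + 1) % n)) := by
    intro i hi
    rw [mem_range] at hi
    refine one_le_rectDist fun h => ?_
    have := hinj i hi _ (Nat.mod_lt _ (by omega)) h
    rcases Nat.lt_or_ge (i + 1) n with h' | h'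
    · rw [Nat.mod_eq_of_lt h'] at this
      omega
    · rw [show i + 1 = n by omega, Nat.mod_self] at this
      omega
  simpa using card_nsmul_le_sum _ _ 1 hstep

def snake (w : ℤ) (i : ℕ) : ℤ × ℤ := if (i : ℤ) < w then (i, 0) else (2 * w - 1 - i, 1)

theorem snake_mem_strip {w : ℤ} {i : ℕ} (hi : (i : ℤ) < 2 * w) : snake w i ∈ strip w := by
  rw [mem_strip]
  unfold snake
  split_ifs <;> simp <;> omega

theorem rectDist_snake {n : ℕ} {w : ℤ} (hn : (n : ℤ) = 2 * w) {i : ℕ} (hi : i < n) :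
    rectDist (snake w i) (snake w ((i + 1) % n)) = 1 := by
  rcases Nat.lt_or_ge (i + 1) n with h | h
  · rw [Nat.mod_eq_of_lt h]
    unfold snake
    split_ifs <;> push_cast <;> simp only [rectDist, Int.abs_eq_natAbs] <;> omega
  · rw [show i + 1 = n by omega, Nat.mod_self]
    unfold snake
    split_ifs <;> push_cast <;> simp only [rectDist, Int.abs_eq_natAbs] <;> omega

theorem exists_cyclic_tour_sum_rectDist_eq {n : ℕ} {w : ℤ} (hn : (n : ℤ) = 2 * w) :
    ∃ y : ℕ → ℤ × ℤ, (∀ i < n, y i ∈ strip w) ∧ (∀ i < n, ∀ j < n, y i = y j → i = j) ∧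
      (∀ p ∈ strip w, ∃ i < n, y i = p) ∧
      ∑ i ∈ range n, rectDist (y i) (y ((i + 1) % n)) = n := by
  have hmem (i : ℕ) (hi : i < n) : snake w i ∈ strip w := snake_mem_strip (by omega)
  have hinj (i : ℕ) (_ : i < n) (j : ℕ) (_ : j < n) (h : snake w i = snake w j) : i = j := by
    unfold snake at h
    split_ifs at h <;> simp only [Prod.mk.injEq] at h <;> omega
  refine ⟨snake w, hmem, hinj, exists_eq_of_mem_strip hn hmem hinj, ?_⟩
  rw [sum_congr rfl fun i hi => rectDist_snake hn (mem_range.mp hi)]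
  simp

theorem logb_sub_one_div_four_le (k : ℕ) {T : ℝ} (hT : (12 + 4 * k) * 2 ^ k - 3 ≤ T) :
    (Real.logb 2 (16 * 2 ^ k - 6) - 1) / 4 ≤ T / (16 * 2 ^ k - 6) := by
  have hpow : (1 : ℝ) ≤ 2 ^ k := one_le_pow₀ (by norm_num)
  have hpos : (0 : ℝ) < 16 * 2 ^ k - 6 := by linarith
  have hlog : Real.logb 2 (16 * 2 ^ k - 6) ≤ k + 4 := by
    calc Real.logb 2 (16 * 2 ^ k - 6) ≤ Real.logb 2 (2 ^ (k + 4)) :=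
          Real.logb_le_logb_of_le (by norm_num) hpos (by rw [pow_add]; linarith)
      _ = k + 4 := by rw [Real.logb_pow, Real.logb_self_eq_one (by norm_num)]; push_cast; ring
  calc (Real.logb 2 (16 * 2 ^ k - 6) - 1) / 4 ≤ (k + 3) / 4 := by linarith
    _ ≤ ((12 + 4 * k) * 2 ^ k - 3) / (16 * 2 ^ k - 6) := by
      rw [div_le_div_iff₀ (by norm_num) hpos]
      nlinarith [(Nat.cast_nonneg k : (0 : ℝ) ≤ k)]
    _ ≤ T / (16 * 2 ^ k - 6) := by gcongr

theorem exists_nnr_tour_le_closedLength (k : ℕ) {n : ℕ} (hn : (n : ℤ) = 2 * (8 * 2 ^ k - 3)) :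
    ∃ x : ℕ → ℤ × ℤ, (∀ i < n, x i ∈ strip (8 * 2 ^ k - 3)) ∧
      (∀ i < n, ∀ j < n, x i = x j → i = j) ∧ x 0 = (0, 0) ∧
      (∀ i < n - 1, ∀ y ∈ strip (8 * 2 ^ k - 3), (∀ j ≤ i, x j ≠ y) →
        rectDist (x i) (x (i + 1)) ≤ rectDist (x i) y) ∧
      (12 + 4 * k) * 2 ^ k - 3 ≤
        ∑ i ∈ range (n - 1), rectDist (x i) (x (i + 1)) + rectDist (x (n - 1)) (x 0) := by
  obtain ⟨L, e, S, hL, hlong⟩ := exists_isGadget_le_closedLength k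
  have hw : (2 * (4 * 2 ^ k - 3) + 3 : ℤ) = 8 * 2 ^ k - 3 := by ring
  obtain rfl : L.length = n := by have := hL.length_eq; omega
  have hmem (i : ℕ) (hi : i < L.length) : L.getD i (0, 0) ∈ strip (8 * 2 ^ k - 3) := by
    rw [List.getD_eq_getElem _ _ hi, ← hw]
    exact hL.mem_strip_of_mem _ (List.getElem_mem hi)
  have hinj (i : ℕ) (hi : i < L.length) (j : ℕ) (hj : j < L.length)
      (h : L.getD i (0, 0) = L.getD j (0, 0)) : i = j := by
    rwa [List.getD_eq_getElem _ _ hi, List.getD_eq_getElem _ _ hj, hL.nodup.getElem_inj_iff] at h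
  have hcover := exists_eq_of_mem_strip hn hmem hinj
  have hfirst : L.getD 0 (0, 0) = (0, 0) := by
    simp [List.getD_eq_getElem?_getD, ← List.head?_eq_getElem?, hL.head_eq]
  have hlast : L.getD (L.length - 1) (0, 0) = (4 * 2 ^ k - 3, e) := by
    simp [List.getD_eq_getElem?_getD, ← List.getLast?_eq_getElem?, hL.getLast_eq]
  refine ⟨fun i => L.getD i (0, 0), hmem, hinj, hfirst, fun i hi y hy hne => ?_, ?_⟩
  · obtain ⟨j, hj, rfl⟩ := hcover y hy
    have hmemL : L.getD j (0, 0) ∈ L := by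
      rw [List.getD_eq_getElem _ _ hj]
      exact List.getElem_mem hj
    exact hL.nnr.le_of_forall_getD_ne hmemL (by omega) hne
  · beta_reduce
    rw [sum_range_getD_eq_pathLength, hfirst, hlast]
    exact hlong.trans (by gcongr; exact hL.le_pathLength)

end NNRTour

open NNRTour in
/-- On the `2 × (8·2^k − 3)` grid `V_k` (with `n = 16·2^k − 6` points) under
the rectilinear distance, there is an NNR tour starting at `(0,0)` whose closed length is
at least `(12 + 4k)·2^k − 3`; every traveling salesman tour has length at least `n` and
some tour has length exactly `n`; hence the ratio of the NNR tour length to the optimum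
tour length is at least `(log₂ n − 1)/4`. -/
theorem nnr_tour_ratio_rectilinear (k : ℕ) (n : ℕ) (hn : n = 16 * 2 ^ k - 6)
    (V : Set (ℤ × ℤ))
    (hV : V = {p : ℤ × ℤ | 0 ≤ p.1 ∧ p.1 ≤ 8 * 2 ^ k - 4 ∧ (p.2 = 0 ∨ p.2 = 1)})
    (d : ℤ × ℤ → ℤ × ℤ → ℝ)
    (hd : ∀ p q : ℤ × ℤ, d p q = |(p.1 : ℝ) - (q.1 : ℝ)| + |(p.2 : ℝ) - (q.2 : ℝ)|) :
    (∃ x : ℕ → ℤ × ℤ,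
      (∀ i < n, x i ∈ V) ∧
      (∀ i < n, ∀ j < n, x i = x j → i = j) ∧
      (∀ p ∈ V, ∃ i < n, x i = p) ∧
      x 0 = (0, 0) ∧
      (∀ i < n - 1, ∀ y ∈ V, (∀ j ≤ i, x j ≠ y) →
        d (x i) (x (i + 1)) ≤ d (x i) y) ∧
      (12 + 4 * (k : ℝ)) * 2 ^ k - 3
        ≤ (∑ i ∈ Finset.range (n - 1), d (x i) (x (i + 1))) + d (x (n - 1)) (x 0) ∧
      (Real.logb 2 n - 1) / 4
        ≤ ((∑ i ∈ Finset.range (n - 1), d (x i) (x (i + 1))) + d (x (n - 1)) (x 0)) / n) ∧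
    (∀ y : ℕ → ℤ × ℤ,
      (∀ i < n, y i ∈ V) →
      (∀ i < n, ∀ j < n, y i = y j → i = j) →
      (∀ p ∈ V, ∃ i < n, y i = p) →
      (n : ℝ) ≤ ∑ i ∈ Finset.range n, d (y i) (y ((i + 1) % n))) ∧
    (∃ y : ℕ → ℤ × ℤ,
      (∀ i < n, y i ∈ V) ∧
      (∀ i < n, ∀ j < n, y i = y j → i = j) ∧
      (∀ p ∈ V, ∃ i < n, y i = p) ∧
      ∑ i ∈ Finset.range n, d (y i) (y ((i + 1) % n)) = (n : ℝ)) := by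
  have hpow : 6 ≤ 16 * 2 ^ k := by have := Nat.one_le_two_pow (n := k); omega
  have hnZ : (n : ℤ) = 2 * (8 * 2 ^ k - 3) := by
    rw [hn, Nat.cast_sub hpow]
    push_cast
    ring
  have hnR : (n : ℝ) = 16 * 2 ^ k - 6 := by
    rw [hn, Nat.cast_sub hpow]
    push_cast
    ring
  have hV' : V = strip (8 * 2 ^ k - 3) := by
    ext p
    simp only [hV, Set.mem_ofPred_eq, Finset.mem_coe, mem_strip]
    omega
  have hd' (p q : ℤ × ℤ) : d p q = rectDist p q := by
    rw [hd]
    push_cast [rectDist]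
    rfl
  subst hV'
  simp only [hd']
  obtain ⟨x, hmem, hinj, hx0, hnnr, hlong⟩ := exists_nnr_tour_le_closedLength k hnZ
  have hlong' : (12 + 4 * (k : ℝ)) * 2 ^ k - 3 ≤
      ∑ i ∈ Finset.range (n - 1), (rectDist (x i) (x (i + 1)) : ℝ) +
        rectDist (x (n - 1)) (x 0) := by
    exact_mod_cast hlong
  refine ⟨⟨x, hmem, hinj, exists_eq_of_mem_strip hnZ hmem hinj, hx0,
      fun i hi y hy hne => by exact_mod_cast hnnr i hi y hy hne, hlong',
      hnR ▸ logb_sub_one_div_four_le k hlong'⟩,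
    fun y _ hinj _ => by exact_mod_cast natCast_le_sum_rectDist_cyclic (by omega) hinj, ?_⟩
  obtain ⟨y, hy⟩ := exists_cyclic_tour_sum_rectDist_eq hnZ
  exact ⟨y, hy.1, hy.2.1, hy.2.2.1, by exact_mod_cast hy.2.2.2⟩
end
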